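/- arXiv:math/0510511 — 4 statements merged into one kernel-verified Lean document; each statement's English description precedes it below -/
import Mathlib

section
/- Suppose a group G acts geometrically (i.e., by isometries, properly and cocompactly) on a CAT(0) space X. If there exists an element g0 ∈ G such that (1) the centralizer Z_{g0} = {h ∈ G : g0 h = h g0} is finite, (2) X \ F_{g0} is not connected, and (3) each connected component of X \ F_{g0} is convex and not g0-invariant, where F_{g0} = {x ∈ X : g0 x = x}, then for every point α of the boundary ∂X the orbit G·α is dense in ∂X; that is, ∂X is minimal for the induced G-action. -/
open Metric Set Filter Pointwise

/-- A unit-speed geodesic segment from `x` to `y`, parametrized on `[0, dist x y]`. -/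
def IsGeodesicFromTo {X : Type*} [MetricSpace X] (f : ℝ → X) (x y : X) : Prop :=
  f 0 = x ∧ f (dist x y) = y ∧
    ∀ s ∈ Set.Icc (0 : ℝ) (dist x y), ∀ t ∈ Set.Icc (0 : ℝ) (dist x y),
      dist (f s) (f t) = |s - t|

/-- A geodesic metric space: any two points are joined by a geodesic segment. -/
def IsGeodesicSpace (X : Type*) [MetricSpace X] : Prop :=
  ∀ x y : X, ∃ f : ℝ → X, IsGeodesicFromTo f x y

/-- A CAT(0) space: a geodesic space all of whose geodesic triangles satisfy the CAT(0)
comparison inequality (stated here in its standard equivalent form: the comparison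
inequality for a point `z` and a point on a geodesic from `x` to `y`). -/
def IsCAT0Space (X : Type*) [MetricSpace X] : Prop :=
  IsGeodesicSpace X ∧
    ∀ (x y z : X) (f : ℝ → X), IsGeodesicFromTo f x y →
      ∀ t ∈ Set.Icc (0 : ℝ) 1,
        dist z (f (t * dist x y)) ^ 2 ≤
          (1 - t) * dist z x ^ 2 + t * dist z y ^ 2 - t * (1 - t) * dist x y ^ 2

/-- A subset `C` is (geodesically) convex: every geodesic segment between points of `C`
lies in `C`. -/
def GeodesicConvex {X : Type*} [MetricSpace X] (C : Set X) : Prop :=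
  ∀ x ∈ C, ∀ y ∈ C, ∀ f : ℝ → X, IsGeodesicFromTo f x y →
    ∀ t ∈ Set.Icc (0 : ℝ) (dist x y), f t ∈ C

/-- A geometric action: an action by isometries which is proper and cocompact. -/
structure IsGeometricAction (G X : Type*) [Group G] [MetricSpace X] [MulAction G X] : Prop where
  isometry : ∀ g : G, Isometry (fun x : X => g • x)
  proper : ∀ K : Set X, IsCompact K →
    {g : G | ((fun x : X => g • x) '' K ∩ K).Nonempty}.Finite
  cocompact : ∃ K : Set X, IsCompact K ∧ ⋃ g : G, (fun x : X => g • x) '' K = Set.univ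

/-- A unit-speed geodesic ray starting at `x0`. -/
def IsGeodesicRayFrom {X : Type*} [MetricSpace X] (x0 : X) (ξ : ℝ → X) : Prop :=
  ξ 0 = x0 ∧ ∀ s t : ℝ, 0 ≤ s → 0 ≤ t → dist (ξ s) (ξ t) = |s - t|

/-- The boundary of a proper CAT(0) space, modelled as the set of geodesic rays emanating
from the basepoint `x0`; the cone topology coincides with the topology of pointwise
convergence of rays (as a subspace of `ℝ → X` with the product topology). -/
abbrev Boundary (X : Type*) [MetricSpace X] (x0 : X) : Type _ :=
  {ξ : ℝ → X // IsGeodesicRayFrom x0 ξ}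

/-- Two maps `ℝ → X` are asymptotic if they are at bounded distance on `[0, ∞)`. -/
def AsymptoticMaps {X : Type*} [MetricSpace X] (f g : ℝ → X) : Prop :=
  ∃ C : ℝ, ∀ t : ℝ, 0 ≤ t → dist (f t) (g t) ≤ C

/-- The image `Im ξ` of a geodesic ray `ξ` (on `[0, ∞)`). -/
def rayImage {X : Type*} [MetricSpace X] {x0 : X} (ξ : Boundary X x0) : Set X :=
  ξ.1 '' Set.Ici (0 : ℝ)

/-- A sequence of points of `X` converges, in the cone topology on `X ∪ ∂X`, to the
boundary point `β`: the distances from the basepoint tend to infinity, and the geodesic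
segments from the basepoint to the points of the sequence converge pointwise to the ray
representing `β`. -/
def TendstoBoundary {X : Type*} [MetricSpace X] (x0 : X) (x : ℕ → X) (β : Boundary X x0) : Prop :=
  Tendsto (fun n => dist x0 (x n)) atTop atTop ∧
    ∀ f : ℕ → ℝ → X, (∀ n, IsGeodesicFromTo (f n) x0 (x n)) →
      ∀ t : ℝ, 0 ≤ t →
        Tendsto (fun n => f n (min t (dist x0 (x n)))) atTop (nhds (β.1 t))

section BMBasic

variable {X : Type*} [MetricSpace X]

lemma BM.geo_continuousOn {f : ℝ → X} {x y : X} (h : IsGeodesicFromTo f x y) :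
    ContinuousOn f (Set.Icc 0 (dist x y)) := by
  refine LipschitzOnWith.continuousOn (K := 1) ?_
  rw [lipschitzOnWith_iff_dist_le_mul]
  intro s hs t ht
  rw [h.2.2 s hs t ht, Real.dist_eq]
  simp

lemma BM.geo_reverse {f : ℝ → X} {x y : X} (h : IsGeodesicFromTo f x y) :
    IsGeodesicFromTo (fun u => f (dist x y - u)) y x := by
  refine ⟨by simpa using h.2.1, ?_, ?_⟩
  · simp [dist_comm y x, h.1]
  · intro s hs t ht
    rw [dist_comm y x] at hs ht
    have h1 : dist x y - s ∈ Set.Icc (0:ℝ) (dist x y) := ⟨by linarith [hs.2], by linarith [hs.1]⟩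
    have h2 : dist x y - t ∈ Set.Icc (0:ℝ) (dist x y) := ⟨by linarith [ht.2], by linarith [ht.1]⟩
    rw [h.2.2 _ h1 _ h2]
    rw [abs_sub_comm]
    ring_nf

lemma BM.geo_dist_from_start {f : ℝ → X} {x y : X} (h : IsGeodesicFromTo f x y)
    {t : ℝ} (ht : t ∈ Set.Icc (0:ℝ) (dist x y)) : dist x (f t) = t := by
  have h0 : (0:ℝ) ∈ Set.Icc (0:ℝ) (dist x y) := ⟨le_refl _, dist_nonneg⟩
  have := h.2.2 0 h0 t ht
  rw [h.1] at this
  rw [this, abs_sub_comm, abs_of_nonneg (by linarith [ht.1])]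
  ring

/-- the restriction of a geodesic to an initial segment is a geodesic to the
corresponding point. -/
lemma BM.geo_restrict {f : ℝ → X} {x y : X} (h : IsGeodesicFromTo f x y)
    {T : ℝ} (hT : T ∈ Set.Icc (0:ℝ) (dist x y)) : IsGeodesicFromTo f x (f T) := by
  have hd : dist x (f T) = T := BM.geo_dist_from_start h hT
  refine ⟨h.1, by rw [hd], ?_⟩
  intro s hs t ht
  rw [hd] at hs ht
  have hs' : s ∈ Set.Icc (0:ℝ) (dist x y) := ⟨hs.1, le_trans hs.2 hT.2⟩
  have ht' : t ∈ Set.Icc (0:ℝ) (dist x y) := ⟨ht.1, le_trans ht.2 hT.2⟩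
  exact h.2.2 s hs' t ht'

lemma BM.ray_dist {x0 : X} {ν : ℝ → X} (h : IsGeodesicRayFrom x0 ν)
    {t : ℝ} (ht : 0 ≤ t) : dist x0 (ν t) = t := by
  have := h.2 0 t le_rfl ht
  rw [h.1] at this
  rw [this, abs_sub_comm, abs_of_nonneg (by linarith : (0:ℝ) ≤ t - 0)]
  ring

lemma BM.ray_restrict {x0 : X} {ν : ℝ → X} (h : IsGeodesicRayFrom x0 ν)
    {T : ℝ} (hT : 0 ≤ T) : IsGeodesicFromTo ν x0 (ν T) := by
  have hd : dist x0 (ν T) = T := BM.ray_dist h hT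
  refine ⟨h.1, by rw [hd], ?_⟩
  intro s hs t ht
  rw [hd] at hs ht
  exact h.2 s t hs.1 ht.1

lemma BM.ray_continuousOn {x0 : X} {ν : ℝ → X} (h : IsGeodesicRayFrom x0 ν)
    {T : ℝ} : ContinuousOn ν (Set.Icc 0 T) := by
  refine LipschitzOnWith.continuousOn (K := 1) ?_
  rw [lipschitzOnWith_iff_dist_le_mul]
  intro s hs t ht
  rw [h.2 s t hs.1 ht.1, Real.dist_eq]
  simp

/-- CAT(0) convexity for two geodesics issuing from a common point. -/
lemma BM.convex_common (hCAT : IsCAT0Space X) {x0 P Q : X} {f h : ℝ → X}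
    (hf : IsGeodesicFromTo f x0 P) (hh : IsGeodesicFromTo h x0 Q)
    {t : ℝ} (ht : t ∈ Set.Icc (0:ℝ) 1) :
    dist (f (t * dist x0 P)) (h (t * dist x0 Q)) ≤ t * dist P Q := by
  set d1 := dist x0 P with hd1
  set d2 := dist x0 Q with hd2
  have htm : t * d1 ∈ Set.Icc (0:ℝ) d1 := by
    constructor
    · exact mul_nonneg ht.1 dist_nonneg
    · nlinarith [ht.2, dist_nonneg (x := x0) (y := P)]
  set z := f (t * d1) with hz
  have h1 := hCAT.2 x0 Q z h hh t ht
  have h2 := hCAT.2 x0 P Q f hf t ht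
  have hz0 : dist z x0 = t * d1 := by
    have h0 : (0:ℝ) ∈ Set.Icc (0:ℝ) d1 := ⟨le_refl _, dist_nonneg⟩
    have := hf.2.2 (t * d1) htm 0 h0
    rw [hf.1] at this
    rw [hz, this, abs_of_nonneg (by linarith [htm.1])]
    ring
  rw [hz0] at h1
  have hQz : dist z Q = dist Q (f (t * d1)) := by rw [hz, dist_comm]
  rw [hQz] at h1
  have hQx0 : dist Q x0 = d2 := dist_comm Q x0
  rw [hQx0] at h2
  have hQP : dist Q P = dist P Q := dist_comm Q P
  rw [hQP] at h2
  have key : dist z (h (t * d2)) ^ 2 ≤ (t * dist P Q) ^ 2 := by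
    nlinarith [h1, h2, ht.1, ht.2, mul_le_mul_of_nonneg_left h2 ht.1]
  have h4 : dist z (h (t * d2)) = Real.sqrt (dist z (h (t * d2)) ^ 2) :=
    (Real.sqrt_sq dist_nonneg).symm
  rw [h4]
  calc Real.sqrt (dist z (h (t * d2)) ^ 2) ≤ Real.sqrt ((t * dist P Q) ^ 2) :=
        Real.sqrt_le_sqrt key
    _ = t * dist P Q := Real.sqrt_sq (mul_nonneg ht.1 dist_nonneg)

/-- CAT(0) convexity of the distance between two geodesics. -/
lemma BM.convex_two (hCAT : IsCAT0Space X) {x y P Q : X} {f h : ℝ → X}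
    (hf : IsGeodesicFromTo f x P) (hh : IsGeodesicFromTo h y Q)
    {t : ℝ} (ht : t ∈ Set.Icc (0:ℝ) 1) :
    dist (f (t * dist x P)) (h (t * dist y Q)) ≤ (1 - t) * dist x y + t * dist P Q := by
  obtain ⟨k, hk⟩ := hCAT.1 x Q
  have e1 : dist (f (t * dist x P)) (k (t * dist x Q)) ≤ t * dist P Q :=
    BM.convex_common hCAT hf hk ht
  have ht' : (1 - t) ∈ Set.Icc (0:ℝ) 1 := ⟨by linarith [ht.2], by linarith [ht.1]⟩
  have e2' := BM.convex_common hCAT (BM.geo_reverse hk) (BM.geo_reverse hh) ht'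
  -- e2' : dist ((fun u => k (dist x Q - u)) ((1-t) * dist Q x)) ((fun u => h (dist y Q - u)) ((1-t) * dist Q y)) ≤ (1-t) * dist x y
  simp only [dist_comm Q x, dist_comm Q y] at e2'
  have ekx : dist x Q - (1 - t) * dist x Q = t * dist x Q := by ring
  have ehy : dist y Q - (1 - t) * dist y Q = t * dist y Q := by ring
  rw [ekx, ehy] at e2'
  calc dist (f (t * dist x P)) (h (t * dist y Q))
      ≤ dist (f (t * dist x P)) (k (t * dist x Q)) + dist (k (t * dist x Q)) (h (t * dist y Q)) :=
        dist_triangle _ _ _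
    _ ≤ t * dist P Q + (1 - t) * dist x y := add_le_add e1 e2'
    _ = (1 - t) * dist x y + t * dist P Q := by ring

end BMBasic

section BMGroup

variable {G X : Type*} [Group G] [MetricSpace X] [MulAction G X]

lemma BM.smul_connectedComponentIn (hGA : IsGeometricAction G X) (g : G) (U : Set X) (x : X) :
    g • connectedComponentIn U x = connectedComponentIn (g • U) (g • x) := by
  have key : ∀ (g : G) (U : Set X) (x : X),
      g • connectedComponentIn U x ⊆ connectedComponentIn (g • U) (g • x) := by
    intro g U x
    by_cases hx : x ∈ U
    · have hpc : IsPreconnected ((fun z : X => g • z) '' connectedComponentIn U x) :=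
        (isPreconnected_connectedComponentIn).image _ ((hGA.isometry g).continuous.continuousOn)
      have hmem : g • x ∈ (fun z : X => g • z) '' connectedComponentIn U x :=
        ⟨x, mem_connectedComponentIn hx, rfl⟩
      have hsub : (fun z : X => g • z) '' connectedComponentIn U x ⊆ g • U := by
        rw [image_smul]
        exact smul_set_mono (connectedComponentIn_subset U x)
      have := hpc.subset_connectedComponentIn hmem hsub
      rwa [image_smul] at this
    · rw [connectedComponentIn_eq_empty hx]
      simp
  refine le_antisymm (key g U x) ?_
  have h2 := key g⁻¹ (g • U) (g • x)
  rw [inv_smul_smul, inv_smul_smul] at h2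
  calc connectedComponentIn (g • U) (g • x)
      = g • (g⁻¹ • connectedComponentIn (g • U) (g • x)) := by rw [smul_inv_smul]
    _ ⊆ g • connectedComponentIn U x := smul_set_mono h2

lemma BM.cauchy_converges (hGA : IsGeometricAction G X) :
    ∀ u : ℕ → X, CauchySeq u → ∃ x : X, Tendsto u atTop (nhds x) := by
  intro u hu
  obtain ⟨K, hK, hcov⟩ := hGA.cocompact
  have hex : ∀ n : ℕ, ∃ (g : G) (k : X), k ∈ K ∧ g • k = u n := by
    intro n
    have hn : u n ∈ ⋃ g : G, (fun x : X => g • x) '' K := by rw [hcov]; trivial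
    simp only [Set.mem_iUnion, Set.mem_image] at hn
    obtain ⟨g, k, hk, he⟩ := hn
    exact ⟨g, k, hk, he⟩
  choose g k hkK hgk using hex
  obtain ⟨kl, hklK, φ, hφ, hktend⟩ := hK.tendsto_subseq (x := fun n => k n) hkK
  have hkd : Tendsto (fun i => dist (k (φ i)) kl) atTop (nhds 0) := by
    rw [tendsto_iff_dist_tendsto_zero] at hktend
    exact hktend
  set y : ℕ → X := fun i => g (φ i) • kl with hy
  have hdist_uy : ∀ i, dist (u (φ i)) (y i) = dist (k (φ i)) kl := by
    intro i
    rw [hy, ← hgk (φ i)]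
    exact (hGA.isometry (g (φ i))).dist_eq _ _
  have hyc : CauchySeq y := by
    rw [Metric.cauchySeq_iff]
    intro ε hε
    obtain ⟨N1, hN1⟩ := (Metric.cauchySeq_iff.mp hu) (ε/3) (by linarith)
    obtain ⟨N2, hN2⟩ := (Metric.tendsto_atTop.mp hkd) (ε/3) (by linarith)
    refine ⟨max N1 N2, fun i hi j hj => ?_⟩
    have hiN1 : N1 ≤ φ i := le_trans (le_trans (le_max_left _ _) hi) (hφ.le_apply)
    have hjN1 : N1 ≤ φ j := le_trans (le_trans (le_max_left _ _) hj) (hφ.le_apply)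
    have h1 := hN1 (φ i) hiN1 (φ j) hjN1
    have h2 := hN2 i (le_trans (le_max_right _ _) hi)
    have h3 := hN2 j (le_trans (le_max_right _ _) hj)
    rw [Real.dist_eq] at h2 h3
    have h2' : dist (k (φ i)) kl < ε/3 := by
      have := abs_nonneg (dist (k (φ i)) kl - 0)
      rw [sub_zero] at h2
      calc dist (k (φ i)) kl ≤ |dist (k (φ i)) kl| := le_abs_self _
        _ < ε/3 := h2
    have h3' : dist (k (φ j)) kl < ε/3 := by
      rw [sub_zero] at h3
      calc dist (k (φ j)) kl ≤ |dist (k (φ j)) kl| := le_abs_self _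
        _ < ε/3 := h3
    calc dist (y i) (y j) ≤ dist (y i) (u (φ i)) + dist (u (φ i)) (u (φ j)) + dist (u (φ j)) (y j) :=
          dist_triangle4 _ _ _ _
      _ < ε/3 + ε/3 + ε/3 := by
          rw [dist_comm (y i) (u (φ i)), hdist_uy i, hdist_uy j]
          exact add_lt_add (add_lt_add h2' h1) h3'
      _ = ε := by ring
  set c : ℕ → G := fun i => (g (φ (i+1)))⁻¹ * (g (φ i)) with hc
  have hcd : ∀ i, dist (c i • kl) kl = dist (y i) (y (i+1)) := by
    intro i
    have : (g (φ (i+1))) • (c i • kl) = y i := by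
      rw [hc]; rw [smul_smul]; rw [hy]
      simp [mul_assoc]
    calc dist (c i • kl) kl
        = dist ((g (φ (i+1))) • (c i • kl)) ((g (φ (i+1))) • kl) :=
          ((hGA.isometry (g (φ (i+1)))).dist_eq _ _).symm
      _ = dist (y i) (y (i+1)) := by rw [this]
  have htend0 : Tendsto (fun i => dist (c i • kl) kl) atTop (nhds 0) := by
    rw [Metric.tendsto_atTop]
    intro ε hε
    obtain ⟨N, hN⟩ := Metric.cauchySeq_iff.mp hyc ε hε
    refine ⟨N, fun i hi => ?_⟩
    rw [Real.dist_eq, sub_zero, abs_of_nonneg dist_nonneg, hcd]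
    exact hN i hi (i+1) (le_trans hi (Nat.le_succ _))
  have hctend : Tendsto (fun i => c i • kl) atTop (nhds kl) := by
    rw [tendsto_iff_dist_tendsto_zero]
    exact htend0
  have hCcomp : IsCompact ((insert kl (Set.range fun i => c i • kl)) ∪ K) :=
    (hctend.isCompact_insert_range).union hK
  have hΦfin := hGA.proper _ hCcomp
  have hciΦ : ∀ i, c i ∈ {g : G | ((fun x : X => g • x) '' ((insert kl (Set.range fun i => c i • kl)) ∪ K) ∩ ((insert kl (Set.range fun i => c i • kl)) ∪ K)).Nonempty} := by
    intro i
    refine ⟨c i • kl, ⟨kl, Or.inr hklK, rfl⟩, Or.inl ?_⟩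
    exact Set.mem_insert_iff.mpr (Or.inr ⟨i, rfl⟩)
  set Dvals := (fun h : G => dist (h • kl) kl) '' {g : G | ((fun x : X => g • x) '' ((insert kl (Set.range fun i => c i • kl)) ∪ K) ∩ ((insert kl (Set.range fun i => c i • kl)) ∪ K)).Nonempty} with hDvals
  have hDfin : Dvals.Finite := hΦfin.image _
  have hdvD : ∀ i, dist (c i • kl) kl ∈ Dvals := fun i => ⟨c i, hciΦ i, rfl⟩
  have hev : ∃ N, ∀ i ≥ N, dist (c i • kl) kl = 0 := by
    by_cases hT : (Dvals ∩ Set.Ioi (0:ℝ)).Nonempty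
    · have hTfin : (Dvals ∩ Set.Ioi (0:ℝ)).Finite := hDfin.inter_of_left _
      have hTne : hTfin.toFinset.Nonempty := by
        rw [Set.Finite.toFinset_nonempty]; exact hT
      set v := hTfin.toFinset.min' hTne with hv
      have hvpos : 0 < v := by
        have hmem := hTfin.toFinset.min'_mem hTne
        rw [Set.Finite.mem_toFinset] at hmem
        exact hmem.2
      obtain ⟨N, hN⟩ := (Metric.tendsto_atTop.mp htend0) v hvpos
      refine ⟨N, fun i hi => ?_⟩
      have := hN i hi
      rw [Real.dist_eq, sub_zero, abs_of_nonneg dist_nonneg] at this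
      by_contra hne
      have hpos : 0 < dist (c i • kl) kl := lt_of_le_of_ne dist_nonneg (Ne.symm hne)
      have hmin : v ≤ dist (c i • kl) kl := by
        apply hTfin.toFinset.min'_le
        rw [Set.Finite.mem_toFinset]
        exact ⟨hdvD i, hpos⟩
      linarith
    · refine ⟨0, fun i _ => ?_⟩
      by_contra hne
      exact hT ⟨dist (c i • kl) kl, hdvD i, lt_of_le_of_ne dist_nonneg (Ne.symm hne)⟩
  obtain ⟨N, hN⟩ := hev
  have hyconst : ∀ i ≥ N, y i = y N := by
    intro i hi
    induction i, hi using Nat.le_induction with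
    | base => rfl
    | succ n hn ih =>
      rw [← ih]
      have h0 : dist (c n • kl) kl = 0 := hN n hn
      have h1 : c n • kl = kl := by rwa [dist_eq_zero] at h0
      rw [hc] at h1
      rw [mul_smul] at h1
      have := congrArg (fun w => (g (φ (n+1))) • w) h1
      simp only [smul_inv_smul] at this
      rw [hy]
      exact this.symm
  have huφ : Tendsto (u ∘ φ) atTop (nhds (y N)) := by
    rw [Metric.tendsto_atTop]
    intro ε hε
    obtain ⟨N2, hN2⟩ := (Metric.tendsto_atTop.mp hkd) ε hε
    refine ⟨max N N2, fun i hi => ?_⟩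
    have h1 : y i = y N := hyconst i (le_trans (le_max_left _ _) hi)
    have h2 := hN2 i (le_trans (le_max_right _ _) hi)
    rw [Real.dist_eq, sub_zero] at h2
    calc dist ((u ∘ φ) i) (y N) = dist (u (φ i)) (y i) := by rw [h1]; rfl
      _ = dist (k (φ i)) kl := hdist_uy i
      _ ≤ |dist (k (φ i)) kl| := le_abs_self _
      _ < ε := h2
  exact ⟨y N, tendsto_nhds_of_cauchySeq_of_subseq hu hφ.tendsto_atTop huφ⟩

lemma BM.fixed_bounded (hGA : IsGeometricAction G X) (g0 : G)
    (hZ : {h : G | g0 * h = h * g0}.Finite) (x0 : X) :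
    ∃ R : ℝ, 0 ≤ R ∧ ∀ z : X, g0 • z = z → dist x0 z ≤ R := by
  by_contra hcon
  push_neg at hcon
  obtain ⟨K, hK, hcov⟩ := hGA.cocompact
  have hKne : K.Nonempty := by
    have hn : x0 ∈ ⋃ g : G, (fun x : X => g • x) '' K := by rw [hcov]; trivial
    simp only [Set.mem_iUnion, Set.mem_image] at hn
    obtain ⟨g, kk, hkk, _⟩ := hn
    exact ⟨kk, hkk⟩
  obtain ⟨k0, hk0⟩ := hKne
  obtain ⟨r, hr⟩ := hK.isBounded.subset_closedBall k0
  set D := max r 0 with hD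
  have hKD : K ⊆ closedBall k0 D := subset_trans hr (closedBall_subset_closedBall (le_max_left _ _))
  have hDpos : 0 ≤ D := le_max_right _ _
  have step : ∀ w : X, ∃ z : X, g0 • z = z ∧ dist x0 w + 2*D + 1 < dist x0 z := by
    intro w
    obtain ⟨z, h1, h2⟩ := hcon (dist x0 w + 2*D + 1) (by positivity)
    exact ⟨z, h1, h2⟩
  choose nxt hnxt1 hnxt2 using step
  obtain ⟨z0, hz0fix, _⟩ := hcon 0 le_rfl
  set z : ℕ → X := fun j => Nat.recAux z0 (fun _ w => nxt w) j with hzdef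
  have hzsucc : ∀ j, z (j+1) = nxt (z j) := fun j => rfl
  have hzfix : ∀ j, g0 • z j = z j := by
    intro j
    cases j with
    | zero => exact hz0fix
    | succ n => rw [hzsucc]; exact hnxt1 (z n)
  have hzmono : ∀ j, dist x0 (z j) + 2*D + 1 < dist x0 (z (j+1)) := by
    intro j; rw [hzsucc]; exact hnxt2 (z j)
  have hzgap : ∀ i j, i < j → dist x0 (z i) + 2*D + 1 ≤ dist x0 (z j) := by
    intro i j hij
    induction j with
    | zero => omega
    | succ n ih =>
      rcases Nat.lt_succ_iff_lt_or_eq.mp hij with h | h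
      · have := ih h
        have h2 := hzmono n
        linarith
      · subst h; linarith [hzmono i]
  have hzsep : ∀ i j, i ≠ j → 2*D < dist (z i) (z j) := by
    intro i j hij
    rcases Nat.lt_or_ge i j with h | h
    · have := hzgap i j h
      have htr := dist_triangle x0 (z i) (z j)
      linarith
    · have hji : j < i := lt_of_le_of_ne h (Ne.symm hij)
      have := hzgap j i hji
      have htr := dist_triangle x0 (z j) (z i)
      rw [dist_comm (z i) (z j)]
      linarith
  have hexz : ∀ j : ℕ, ∃ (g : G) (kk : X), kk ∈ K ∧ g • kk = z j := by
    intro j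
    have hn : z j ∈ ⋃ g : G, (fun x : X => g • x) '' K := by rw [hcov]; trivial
    simp only [Set.mem_iUnion, Set.mem_image] at hn
    obtain ⟨g, kk, hkk, he⟩ := hn
    exact ⟨g, kk, hkk, he⟩
  choose gz kk hkkK hgz using hexz
  have hgzinj : Function.Injective gz := by
    intro i j hij
    by_contra hne
    have hsep := hzsep i j hne
    have : dist (z i) (z j) = dist (kk i) (kk j) := by
      rw [← hgz i, ← hgz j, hij]
      exact (hGA.isometry (gz j)).dist_eq _ _
    have h1 : dist (kk i) k0 ≤ D := by have := hKD (hkkK i); rwa [mem_closedBall] at this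
    have h2 : dist (kk j) k0 ≤ D := by have := hKD (hkkK j); rwa [mem_closedBall] at this
    have := dist_triangle (kk i) k0 (kk j)
    rw [dist_comm k0 (kk j)] at this
    linarith
  set c : ℕ → G := fun j => (gz j)⁻¹ * g0 * (gz j) with hc
  have hcfix : ∀ j, (c j) • kk j = kk j := by
    intro j
    rw [hc]
    simp only [mul_smul]
    rw [hgz j, hzfix j, ← hgz j, inv_smul_smul]
  have hcΦ : ∀ j, c j ∈ {g : G | ((fun x : X => g • x) '' K ∩ K).Nonempty} := by
    intro j
    exact ⟨kk j, ⟨kk j, hkkK j, hcfix j⟩, hkkK j⟩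
  have hΦfin := hGA.proper K hK
  haveI : Finite ↥{g : G | ((fun x : X => g • x) '' K ∩ K).Nonempty} := hΦfin.to_subtype
  set c' : ℕ → {g : G | ((fun x : X => g • x) '' K ∩ K).Nonempty} := fun j => ⟨c j, hcΦ j⟩ with hc'
  obtain ⟨v, hv⟩ := Finite.exists_infinite_fiber c'
  have hfibinf : (c' ⁻¹' {v}).Infinite := Set.infinite_coe_iff.mp hv
  obtain ⟨j0, hj0⟩ := hfibinf.nonempty
  have hsub : (fun j => gz j * (gz j0)⁻¹) '' (c' ⁻¹' {v}) ⊆ {h : G | g0 * h = h * g0} := by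
    rintro w ⟨j, hj, rfl⟩
    have hcc : c j = c j0 := by
      have h1 : c' j = v := hj
      have h2 : c' j0 = v := hj0
      have := h1.trans h2.symm
      exact congrArg Subtype.val this
    rw [hc] at hcc
    simp only [Set.mem_setOf_eq]
    have hx : (gz j)⁻¹ * g0 * gz j = (gz j0)⁻¹ * g0 * gz j0 := hcc
    -- (gz j)⁻¹ * g0 * gz j = (gz j0)⁻¹ * g0 * gz j0
    have : g0 * (gz j * (gz j0)⁻¹) = gz j * ((gz j)⁻¹ * g0 * gz j) * (gz j0)⁻¹ := by group
    rw [this, hx]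
    group
  have himg : ((fun j => gz j * (gz j0)⁻¹) '' (c' ⁻¹' {v})).Infinite := by
    apply hfibinf.image
    intro a _ b _ hab
    exact hgzinj (mul_right_cancel hab)
  exact himg (hZ.subset hsub)

end BMGroup

section BMRay

variable {G X : Type*} [Group G] [MetricSpace X] [MulAction G X]

set_option maxHeartbeats 1000000 in
lemma BM.asymptotic_ray (hGA : IsGeometricAction G X) (hCAT : IsCAT0Space X)
    (x0 y0 : X) (γ : ℝ → X) (hγ : IsGeodesicRayFrom y0 γ) :
    ∃ ν : ℝ → X, IsGeodesicRayFrom x0 ν ∧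
      ∀ t : ℝ, 0 ≤ t → dist (ν t) (γ t) ≤ dist x0 y0 + 1 := by
  classical
  choose geo hgeo using hCAT.1
  set c := dist x0 y0 with hc
  have hc0 : 0 ≤ c := dist_nonneg
  set f : ℕ → ℝ → X := fun n => geo x0 (γ (n : ℝ)) with hf
  set a : ℕ → ℝ := fun n => dist x0 (γ (n : ℝ)) with ha
  have hγd : ∀ s t : ℝ, 0 ≤ s → 0 ≤ t → dist (γ s) (γ t) = |s - t| := hγ.2
  have hγ0 : ∀ n : ℕ, dist y0 (γ (n : ℝ)) = (n : ℝ) := by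
    intro n
    exact BM.ray_dist hγ (Nat.cast_nonneg n)
  have ha_lb : ∀ n : ℕ, (n : ℝ) - c ≤ a n := by
    intro n
    have htr := dist_triangle y0 x0 (γ (n : ℝ))
    rw [hγ0 n] at htr
    rw [ha]
    simp only []
    rw [hc] at *
    rw [dist_comm y0 x0] at htr
    linarith
  have ha_ub : ∀ n : ℕ, a n ≤ (n : ℝ) + c := by
    intro n
    have htr := dist_triangle x0 y0 (γ (n : ℝ))
    rw [hγ0 n] at htr
    rw [ha]; simp only []; rw [hc] at *
    linarith
  have ha_nonneg : ∀ n : ℕ, 0 ≤ a n := fun n => dist_nonneg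
  -- The key pairwise estimate.
  have hpair : ∀ t : ℝ, 0 ≤ t → ∀ n m : ℕ, 2*c + t + 1 ≤ (n : ℝ) → n ≤ m →
      dist (f n t) (f m t) ≤
        (t / ((n : ℝ) - c)) * (Real.sqrt (4 * c * ((n : ℝ) + c)) + 4 * c) := by
    intro t ht n m hn hnm
    have hnm' : (n : ℝ) ≤ (m : ℝ) := Nat.cast_le.mpr hnm
    set A := a n with hA
    set B := a m with hB
    set D := (m : ℝ) - (n : ℝ) with hD
    have hD0 : 0 ≤ D := by rw [hD]; linarith
    have hA_lb : (n : ℝ) - c ≤ A := ha_lb n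
    have hA_ub : A ≤ (n : ℝ) + c := ha_ub n
    have hB_lb : (m : ℝ) - c ≤ B := ha_lb m
    have hB_ub : B ≤ (m : ℝ) + c := ha_ub m
    have hnc0 : 0 < (n : ℝ) - c := by linarith
    have hA0 : 0 < A := by linarith
    have hB0 : 0 < B := by linarith
    have htA : t ≤ A := by linarith
    have htB : t ≤ B := by linarith
    have hdistγ : dist (γ (n : ℝ)) (γ (m : ℝ)) = D := by
      rw [hγd _ _ (Nat.cast_nonneg n) (Nat.cast_nonneg m), hD, abs_sub_comm,
        abs_of_nonneg (by linarith : (0:ℝ) ≤ (m:ℝ) - n)]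
    have hBA_le_D : |B - A| ≤ D := by
      have h := abs_dist_sub_le (γ (m : ℝ)) (γ (n : ℝ)) x0
      rw [dist_comm (γ (m : ℝ)) x0, dist_comm (γ (n : ℝ)) x0] at h
      rw [dist_comm (γ (m : ℝ)) (γ (n : ℝ)), hdistγ] at h
      exact h
    have hsqrt_nonneg : 0 ≤ Real.sqrt (4 * c * ((n : ℝ) + c)) := Real.sqrt_nonneg _
    have hfrac_nonneg : 0 ≤ t / ((n : ℝ) - c) := div_nonneg ht hnc0.le
    rcases le_or_gt A B with hAB | hBA
    · -- main case: compare f n with the initial segment of f m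
      have ht0 : A / B ∈ Set.Icc (0:ℝ) 1 :=
        ⟨div_nonneg hA0.le hB0.le, (div_le_one hB0).mpr hAB⟩
      have h1 := hCAT.2 x0 (γ (m : ℝ)) (γ (n : ℝ)) (f m) (hgeo x0 (γ (m : ℝ))) (A/B) ht0
      rw [div_mul_cancel₀ A (ne_of_gt hB0)] at h1
      rw [dist_comm (γ (n : ℝ)) x0] at h1
      rw [hdistγ] at h1
      -- h1 : dist (γ n) (f m A)^2 ≤ (1 - A/B)*A^2 + (A/B)*D^2 - (A/B)*(1-A/B)*B^2
      have heq : (1 - A/B)*A^2 + (A/B)*D^2 - (A/B)*(1-A/B)*B^2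
          = (A/B)*(D^2 - (B-A)^2) := by
        field_simp
        ring
      rw [heq] at h1
      have hDge : B - A ≤ D := by
        have := abs_le.mp hBA_le_D
        exact this.2
      have hDle2c : D - (B - A) ≤ 2*c := by linarith
      have hsum_nonneg : 0 ≤ D + (B - A) := by linarith
      have e2 : D^2 - (B-A)^2 ≤ 2*c*(D + (B-A)) := by
        nlinarith [mul_le_mul_of_nonneg_right hDle2c hsum_nonneg]
      have e3 : (A/B)*(D^2-(B-A)^2) ≤ (A/B)*(2*c*(D+(B-A))) :=
        mul_le_mul_of_nonneg_left e2 (div_nonneg hA0.le hB0.le)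
      have hDleB : D + c ≤ B := by linarith
      have e4 : (A/B)*(2*c*(D+(B-A))) ≤ 4*c*A := by
        rw [div_mul_eq_mul_div, div_le_iff₀ hB0]
        have k1 : D + (B-A) ≤ 2*B := by linarith
        have k2 : 2*c*(D+(B-A)) ≤ 2*c*(2*B) := mul_le_mul_of_nonneg_left k1 (by linarith)
        have k3 : A*(2*c*(D+(B-A))) ≤ A*(2*c*(2*B)) := mul_le_mul_of_nonneg_left k2 hA0.le
        calc A*(2*c*(D+(B-A))) ≤ A*(2*c*(2*B)) := k3
          _ = 4*c*A*B := by ring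
      have hsq : dist (γ (n : ℝ)) (f m A) ^ 2 ≤ 4*c*A := by linarith
      have hdistq : dist (γ (n : ℝ)) (f m A) ≤ Real.sqrt (4*c*A) := by
        rw [← Real.sqrt_sq (dist_nonneg : (0:ℝ) ≤ dist (γ (n : ℝ)) (f m A))]
        exact Real.sqrt_le_sqrt hsq
      -- restriction of f m to [0, A]
      have hAmem : A ∈ Set.Icc (0:ℝ) (dist x0 (γ (m : ℝ))) := ⟨hA0.le, hAB⟩
      have hres : IsGeodesicFromTo (f m) x0 (f m A) :=
        BM.geo_restrict (hgeo x0 (γ (m : ℝ))) hAmem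
      have hdq : dist x0 (f m A) = A := BM.geo_dist_from_start (hgeo x0 (γ (m : ℝ))) hAmem
      have htdiv : t / A ∈ Set.Icc (0:ℝ) 1 := ⟨div_nonneg ht hA0.le, (div_le_one hA0).mpr htA⟩
      have e5 := BM.convex_common hCAT (hgeo x0 (γ (n : ℝ))) hres htdiv
      rw [hdq] at e5
      have hAA : dist x0 (γ (n:ℝ)) = A := rfl
      rw [hAA, div_mul_cancel₀ t (ne_of_gt hA0)] at e5
      -- e5 : dist (f n t) (f m t) ≤ (t/A) * dist (γ n) (f m A)
      have e6 : (t/A) * dist (γ (n : ℝ)) (f m A) ≤ (t/((n:ℝ)-c)) * Real.sqrt (4*c*((n:ℝ)+c)) := by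
        have q1 : t/A ≤ t/((n:ℝ)-c) := div_le_div_of_nonneg_left ht hnc0 hA_lb
        have q2 : Real.sqrt (4*c*A) ≤ Real.sqrt (4*c*((n:ℝ)+c)) :=
          Real.sqrt_le_sqrt (by nlinarith)
        have q3 : dist (γ (n : ℝ)) (f m A) ≤ Real.sqrt (4*c*((n:ℝ)+c)) := le_trans hdistq q2
        exact mul_le_mul q1 q3 dist_nonneg hfrac_nonneg
      calc dist (f n t) (f m t) ≤ (t/A) * dist (γ (n : ℝ)) (f m A) := e5
        _ ≤ (t/((n:ℝ)-c)) * Real.sqrt (4*c*((n:ℝ)+c)) := e6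
        _ ≤ (t/((n:ℝ)-c)) * (Real.sqrt (4*c*((n:ℝ)+c)) + 4*c) :=
            mul_le_mul_of_nonneg_left (by linarith) hfrac_nonneg
    · -- case B < A : then D < 2c, use direct comparison
      have hD2c : D < 2*c := by linarith
      have htdiv : t / A ∈ Set.Icc (0:ℝ) 1 := ⟨div_nonneg ht hA0.le, (div_le_one hA0).mpr htA⟩
      have e1 := BM.convex_common hCAT (hgeo x0 (γ (n : ℝ))) (hgeo x0 (γ (m : ℝ))) htdiv
      have hAA : dist x0 (γ (n:ℝ)) = A := rfl
      have hBB : dist x0 (γ (m:ℝ)) = B := rfl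
      rw [hAA, hBB, div_mul_cancel₀ t (ne_of_gt hA0), hdistγ] at e1
      -- e1 : dist (f n t) (f m ((t/A)*B)) ≤ (t/A) * D
      have hmem1 : (t/A)*B ∈ Set.Icc (0:ℝ) (dist x0 (γ (m : ℝ))) := by
        rw [hBB]
        constructor
        · exact mul_nonneg (div_nonneg ht hA0.le) hB0.le
        · nlinarith [(div_le_one hA0).mpr htA, hB0.le]
      have hmem2 : t ∈ Set.Icc (0:ℝ) (dist x0 (γ (m : ℝ))) := by rw [hBB]; exact ⟨ht, htB⟩
      have e2 : dist (f m ((t/A)*B)) (f m t) = |(t/A)*B - t| :=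
        (hgeo x0 (γ (m : ℝ))).2.2 _ hmem1 _ hmem2
      have e3 : |(t/A)*B - t| ≤ (t/A) * D := by
        have hABD : A - B ≤ D := by
          have := abs_le.mp hBA_le_D
          linarith [this.1]
        rw [abs_le]
        constructor
        · have : (t/A)*(A - B) ≤ (t/A)*D := mul_le_mul_of_nonneg_left hABD (div_nonneg ht hA0.le)
          have hid : (t/A)*A = t := div_mul_cancel₀ t (ne_of_gt hA0)
          nlinarith [this]
        · have hBA' : B - A ≤ D := by
            have := abs_le.mp hBA_le_D
            linarith [this.2]
          have : (t/A)*(B - A) ≤ (t/A)*D := mul_le_mul_of_nonneg_left hBA' (div_nonneg ht hA0.le)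
          have hid : (t/A)*A = t := div_mul_cancel₀ t (ne_of_gt hA0)
          nlinarith [this]
      have e4 : dist (f n t) (f m t) ≤ (t/A)*D + (t/A)*D := by
        calc dist (f n t) (f m t) ≤ dist (f n t) (f m ((t/A)*B)) + dist (f m ((t/A)*B)) (f m t) :=
              dist_triangle _ _ _
          _ ≤ (t/A)*D + (t/A)*D := by
              rw [e2]
              exact add_le_add e1 e3
      have e5 : (t/A)*D + (t/A)*D ≤ (t/((n:ℝ)-c)) * (4*c) := by
        have q1 : t/A ≤ t/((n:ℝ)-c) := div_le_div_of_nonneg_left ht hnc0 hA_lb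
        have q4 : 0 ≤ t/A := div_nonneg ht hA0.le
        nlinarith [q1, hD0, hD2c, hfrac_nonneg]
      calc dist (f n t) (f m t) ≤ (t/A)*D + (t/A)*D := e4
        _ ≤ (t/((n:ℝ)-c)) * (4*c) := e5
        _ ≤ (t/((n:ℝ)-c)) * (Real.sqrt (4*c*((n:ℝ)+c)) + 4*c) :=
            mul_le_mul_of_nonneg_left (by linarith [hsqrt_nonneg]) hfrac_nonneg
  -- the bound tends to zero
  have hbound0 : ∀ t : ℝ, 0 ≤ t →
      Tendsto (fun n : ℕ => (t / ((n : ℝ) - c)) * (Real.sqrt (4 * c * ((n : ℝ) + c)) + 4 * c))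
        atTop (nhds 0) := by
    intro t ht
    have hdenom : Tendsto (fun n : ℕ => (n : ℝ) - c) atTop atTop := by
      have := tendsto_atTop_add_const_right atTop (-c) (tendsto_natCast_atTop_atTop (R := ℝ))
      simpa [sub_eq_add_neg] using this
    have h2 : Tendsto (fun n : ℕ => 4*c*t/((n:ℝ)-c)) atTop (nhds 0) :=
      Tendsto.div_atTop tendsto_const_nhds hdenom
    have hin : Tendsto (fun n : ℕ => 4*c*((n:ℝ)+c)/(((n:ℝ)-c)^2)) atTop (nhds 0) := by
      apply squeeze_zero' (g := fun n : ℕ => 32*c/(n:ℝ))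
      · filter_upwards [eventually_ge_atTop (Nat.ceil (2*c+1))] with n hn
        have hn' : 2*c + 1 ≤ (n:ℝ) := by
          calc 2*c+1 ≤ (Nat.ceil (2*c+1) : ℝ) := Nat.le_ceil _
            _ ≤ (n : ℝ) := Nat.cast_le.mpr hn
        positivity
      · filter_upwards [eventually_ge_atTop (Nat.ceil (4*c+1))] with n hn
        have hn' : 4*c + 1 ≤ (n:ℝ) := by
          calc 4*c+1 ≤ (Nat.ceil (4*c+1) : ℝ) := Nat.le_ceil _
            _ ≤ (n : ℝ) := Nat.cast_le.mpr hn
        have hnpos : (0:ℝ) < n := by linarith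
        have hncpos : (0:ℝ) < (n:ℝ) - c := by linarith
        rw [div_le_div_iff₀ (by positivity) hnpos]
        have hcn : c ≤ ((n:ℝ)-1)/4 := by linarith
        nlinarith [mul_le_mul_of_nonneg_right hcn hnpos.le, hnpos, hc0, mul_nonneg hc0 hc0,
          sq_nonneg ((n:ℝ)-1)]
      · exact tendsto_const_div_atTop_nhds_zero_nat (32*c)
    have hsq0 : Tendsto (fun n : ℕ => Real.sqrt (4*c*((n:ℝ)+c))/((n:ℝ)-c)) atTop (nhds 0) := by
      have h3 : Tendsto (fun n : ℕ => Real.sqrt (4*c*((n:ℝ)+c)/(((n:ℝ)-c)^2))) atTop (nhds 0) := by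
        have := hin.sqrt
        rwa [Real.sqrt_zero] at this
      apply h3.congr'
      filter_upwards [eventually_ge_atTop (Nat.ceil (2*c+1))] with n hn
      have hn' : 2*c + 1 ≤ (n:ℝ) := by
        calc 2*c+1 ≤ (Nat.ceil (2*c+1) : ℝ) := Nat.le_ceil _
          _ ≤ (n : ℝ) := Nat.cast_le.mpr hn
      have hncpos : (0:ℝ) ≤ (n:ℝ) - c := by linarith
      rw [Real.sqrt_div (by positivity) (((n:ℝ)-c)^2), Real.sqrt_sq hncpos]
    have hfinal : Tendsto (fun n : ℕ =>
        t * (Real.sqrt (4*c*((n:ℝ)+c))/((n:ℝ)-c)) + 4*c*t/((n:ℝ)-c)) atTop (nhds 0) := by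
      have := (hsq0.const_mul t).add h2
      simpa using this
    apply hfinal.congr
    intro n
    ring
  -- Cauchy for each t ≥ 0
  have hcauchy : ∀ t : ℝ, 0 ≤ t → CauchySeq (fun n => f n t) := by
    intro t ht
    rw [Metric.cauchySeq_iff]
    intro ε hε
    obtain ⟨N1, hN1⟩ := (Metric.tendsto_atTop.mp (hbound0 t ht)) ε hε
    obtain ⟨N2, hN2⟩ := exists_nat_ge (2*c + t + 1)
    refine ⟨max N1 N2, fun i hi j hj => ?_⟩
    have hiN1 : N1 ≤ i := le_trans (le_max_left _ _) hi
    have hjN1 : N1 ≤ j := le_trans (le_max_left _ _) hj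
    have hiN2 : 2*c + t + 1 ≤ (i : ℝ) :=
      le_trans hN2 (Nat.cast_le.mpr (le_trans (le_max_right _ _) hi))
    have hjN2 : 2*c + t + 1 ≤ (j : ℝ) :=
      le_trans hN2 (Nat.cast_le.mpr (le_trans (le_max_right _ _) hj))
    have hb : ∀ l : ℕ, N1 ≤ l →
        (t / ((l : ℝ) - c)) * (Real.sqrt (4 * c * ((l : ℝ) + c)) + 4 * c) < ε := by
      intro l hl
      have := hN1 l hl
      rw [Real.dist_eq, sub_zero] at this
      calc (t / ((l : ℝ) - c)) * (Real.sqrt (4 * c * ((l : ℝ) + c)) + 4 * c)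
          ≤ |(t / ((l : ℝ) - c)) * (Real.sqrt (4 * c * ((l : ℝ) + c)) + 4 * c)| := le_abs_self _
        _ < ε := this
    rcases le_total i j with hij | hji
    · calc dist (f i t) (f j t)
          ≤ (t / ((i : ℝ) - c)) * (Real.sqrt (4 * c * ((i : ℝ) + c)) + 4 * c) :=
            hpair t ht i j hiN2 hij
        _ < ε := hb i hiN1
    · rw [dist_comm]
      calc dist (f j t) (f i t)
          ≤ (t / ((j : ℝ) - c)) * (Real.sqrt (4 * c * ((j : ℝ) + c)) + 4 * c) :=
            hpair t ht j i hjN2 hji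
        _ < ε := hb j hjN1
  -- define the limit ray
  have hlim : ∀ t : ℝ, ∃ L : X, Tendsto (fun n => f n (max t 0)) atTop (nhds L) := by
    intro t
    exact BM.cauchy_converges hGA _ (hcauchy (max t 0) (le_max_right _ _))
  choose ν hν using hlim
  have hν' : ∀ t : ℝ, 0 ≤ t → Tendsto (fun n => f n t) atTop (nhds (ν t)) := by
    intro t ht
    have := hν t
    rwa [max_eq_left ht] at this
  have hν0 : ν 0 = x0 := by
    have h1 : Tendsto (fun n : ℕ => f n 0) atTop (nhds x0) := by
      have : ∀ n : ℕ, f n 0 = x0 := fun n => (hgeo x0 (γ (n : ℝ))).1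
      simp only [this]
      exact tendsto_const_nhds
    exact tendsto_nhds_unique (hν' 0 le_rfl) h1
  have hνdist : ∀ s t : ℝ, 0 ≤ s → 0 ≤ t → dist (ν s) (ν t) = |s - t| := by
    intro s t hs ht
    have h1 : Tendsto (fun n : ℕ => dist (f n s) (f n t)) atTop (nhds (dist (ν s) (ν t))) :=
      (hν' s hs).dist (hν' t ht)
    obtain ⟨N, hN⟩ := exists_nat_ge (max s t + c + 1)
    have h2 : ∀ᶠ n : ℕ in atTop, dist (f n s) (f n t) = |s - t| := by
      filter_upwards [eventually_ge_atTop N] with n hn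
      have hn' : max s t + c + 1 ≤ (n : ℝ) := le_trans hN (Nat.cast_le.mpr hn)
      have hAn : max s t + 1 ≤ a n := by
        have := ha_lb n
        linarith
      have hsmem : s ∈ Set.Icc (0:ℝ) (dist x0 (γ (n : ℝ))) := by
        constructor
        · exact hs
        · have : s ≤ max s t := le_max_left _ _
          have h3 : a n = dist x0 (γ (n : ℝ)) := rfl
          linarith [hAn]
      have htmem : t ∈ Set.Icc (0:ℝ) (dist x0 (γ (n : ℝ))) := by
        constructor
        · exact ht
        · have : t ≤ max s t := le_max_right _ _
          have h3 : a n = dist x0 (γ (n : ℝ)) := rfl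
          linarith [hAn]
      exact (hgeo x0 (γ (n : ℝ))).2.2 s hsmem t htmem
    have h3 : Tendsto (fun n : ℕ => dist (f n s) (f n t)) atTop (nhds (|s - t|)) :=
      Tendsto.congr' (show (fun _ : ℕ => |s-t|) =ᶠ[atTop] (fun n => dist (f n s) (f n t)) from
        h2.mono fun n h => h.symm) tendsto_const_nhds
    exact tendsto_nhds_unique h1 h3
  refine ⟨ν, ⟨hν0, hνdist⟩, ?_⟩
  -- asymptotic estimate
  intro t ht
  have h1 : Tendsto (fun n : ℕ => dist (f n t) (γ t)) atTop (nhds (dist (ν t) (γ t))) :=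
    (hν' t ht).dist tendsto_const_nhds
  have h2 : ∀ᶠ n : ℕ in atTop, dist (f n t) (γ t) ≤ c + 1 := by
    obtain ⟨N, hN⟩ := exists_nat_ge (max (t*c) (t + c + 1))
    filter_upwards [eventually_ge_atTop (max N 1)] with n hn
    have hnN : (N:ℝ) ≤ (n:ℝ) := Nat.cast_le.mpr (le_trans (le_max_left _ _) hn)
    have hn1 : (1:ℝ) ≤ (n:ℝ) := by
      exact_mod_cast Nat.one_le_cast.mpr (le_trans (le_max_right _ _) hn)
    have hntc : t*c ≤ (n:ℝ) := le_trans (le_trans (le_max_left _ _) hN) hnN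
    have hntc1 : t + c + 1 ≤ (n:ℝ) := le_trans (le_trans (le_max_right _ _) hN) hnN
    have hnpos : (0:ℝ) < (n:ℝ) := by linarith
    have htn : t ≤ (n:ℝ) := by linarith
    -- γ restricted to [0, n] is a geodesic from y0 to γ n
    have hγres : IsGeodesicFromTo γ y0 (γ (n:ℝ)) := BM.ray_restrict hγ (Nat.cast_nonneg n)
    have htdiv : t/(n:ℝ) ∈ Set.Icc (0:ℝ) 1 := ⟨div_nonneg ht hnpos.le, (div_le_one hnpos).mpr htn⟩
    have e1 := BM.convex_two hCAT hγres (hgeo x0 (γ (n : ℝ))) htdiv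
    rw [BM.ray_dist hγ (Nat.cast_nonneg n)] at e1
    rw [div_mul_cancel₀ t (ne_of_gt hnpos)] at e1
    rw [dist_self] at e1
    rw [dist_comm y0 x0] at e1
    -- e1 : dist (γ t) (f n ((t/n) * A)) ≤ (1 - t/n) * c + (t/n)*0
    have hAn := ha_lb n
    have hAn2 := ha_ub n
    have hA0 : (0:ℝ) < a n := by linarith
    have hparam : (t/(n:ℝ)) * dist x0 (γ (n:ℝ)) ∈ Set.Icc (0:ℝ) (dist x0 (γ (n:ℝ))) := by
      constructor
      · exact mul_nonneg (div_nonneg ht hnpos.le) dist_nonneg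
      · nlinarith [(div_le_one hnpos).mpr htn, dist_nonneg (x := x0) (y := γ (n:ℝ))]
    have htmem : t ∈ Set.Icc (0:ℝ) (dist x0 (γ (n:ℝ))) := by
      have h3 : a n = dist x0 (γ (n : ℝ)) := rfl
      constructor
      · exact ht
      · linarith
    have e2 : dist (f n ((t/(n:ℝ)) * dist x0 (γ (n:ℝ)))) (f n t)
        = |(t/(n:ℝ)) * dist x0 (γ (n:ℝ)) - t| :=
      (hgeo x0 (γ (n : ℝ))).2.2 _ hparam t htmem
    have e3 : |(t/(n:ℝ)) * dist x0 (γ (n:ℝ)) - t| ≤ t*c/(n:ℝ) := by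
      have h3 : a n = dist x0 (γ (n : ℝ)) := rfl
      have hid : (t/(n:ℝ)) * dist x0 (γ (n:ℝ)) - t = (t/(n:ℝ)) * (dist x0 (γ (n:ℝ)) - (n:ℝ)) := by
        rw [mul_sub, div_mul_cancel₀ t (ne_of_gt hnpos)]
      rw [hid, abs_mul, abs_of_nonneg (div_nonneg ht hnpos.le)]
      have habs : |dist x0 (γ (n:ℝ)) - (n:ℝ)| ≤ c := by
        rw [abs_le]
        constructor
        · linarith
        · linarith
      calc (t/(n:ℝ)) * |dist x0 (γ (n:ℝ)) - (n:ℝ)| ≤ (t/(n:ℝ)) * c :=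
            mul_le_mul_of_nonneg_left habs (div_nonneg ht hnpos.le)
        _ = t*c/(n:ℝ) := by ring
    have e4 : t*c/(n:ℝ) ≤ 1 := by
      rw [div_le_one hnpos]
      linarith
    calc dist (f n t) (γ t)
        ≤ dist (f n t) (f n ((t/(n:ℝ)) * dist x0 (γ (n:ℝ))))
          + dist (f n ((t/(n:ℝ)) * dist x0 (γ (n:ℝ)))) (γ t) := dist_triangle _ _ _
      _ ≤ t*c/(n:ℝ) + ((1 - t/(n:ℝ)) * c + (t/(n:ℝ)) * 0) := by
          apply add_le_add
          · rw [dist_comm, e2]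
            exact e3
          · rw [dist_comm]
            exact e1
      _ ≤ 1 + c := by
          have h5 : (1 - t/(n:ℝ)) * c ≤ c := by
            have h6 : 0 ≤ t/(n:ℝ) := div_nonneg ht hnpos.le
            nlinarith [hc0]
          linarith [e4]
      _ = c + 1 := by ring
  exact le_of_tendsto h1 h2

end BMRay

set_option maxHeartbeats 1000000 in
/-- Theorem (main theorem, minimality part): if a group `G` acts geometrically on a CAT(0)
space `X` and some `g0 ∈ G` has finite centralizer, `X \ F_{g0}` is not connected, and each
connected component of `X \ F_{g0}` is convex and not `g0`-invariant, then every orbit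
`G·α` is dense in the boundary `∂X`, i.e. `∂X` is minimal. -/
theorem boundary_minimal_of_exists_good_element
    {G X : Type*} [Group G] [MetricSpace X] [MulAction G X]
    (hGA : IsGeometricAction G X) (hCAT : IsCAT0Space X) (g0 : G)
    (hZ : {h : G | g0 * h = h * g0}.Finite)
    (hdisc : ¬ IsPreconnected {x : X | g0 • x = x}ᶜ)
    (hcomp : ∀ x ∈ {x : X | g0 • x = x}ᶜ,
      GeodesicConvex (connectedComponentIn {x : X | g0 • x = x}ᶜ x) ∧
        g0 • connectedComponentIn {x : X | g0 • x = x}ᶜ x ≠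
          connectedComponentIn {x : X | g0 • x = x}ᶜ x) :
    ∀ (x0 : X) (α : Boundary X x0),
      Dense {β : Boundary X x0 | ∃ g : G, AsymptoticMaps (fun t => g • α.1 t) β.1} := by
  classical
  intro x0 α β
  -- constants
  obtain ⟨K, hK, hcov⟩ := hGA.cocompact
  have hKne : K.Nonempty := by
    have hn : x0 ∈ ⋃ g : G, (fun x : X => g • x) '' K := by rw [hcov]; trivial
    simp only [Set.mem_iUnion, Set.mem_image] at hn
    obtain ⟨g, kk, hkk, _⟩ := hn
    exact ⟨kk, hkk⟩
  obtain ⟨k0, hk0⟩ := hKne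
  obtain ⟨r, hr⟩ := hK.isBounded.subset_closedBall k0
  set DK := max r 0 with hDK
  have hKD : K ⊆ closedBall k0 DK := subset_trans hr (closedBall_subset_closedBall (le_max_left _ _))
  have hDK0 : 0 ≤ DK := le_max_right _ _
  obtain ⟨R1, hR10, hR1⟩ := BM.fixed_bounded hGA g0 hZ x0
  set C2 := dist x0 k0 + DK with hC2
  have hC20 : 0 ≤ C2 := by rw [hC2]; positivity
  set R'' := R1 + 1 + C2 with hR''
  have hR''0 : 0 ≤ R'' := by rw [hR'']; linarith
  choose geo hgeo using hCAT.1
  -- core construction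
  have core : ∀ n : ℕ, R1 + C2 + 2 ≤ (n:ℝ) →
      ∃ (ν : ℝ → X) (g : G) (s : ℝ), IsGeodesicRayFrom x0 ν ∧
        AsymptoticMaps (fun t => g • α.1 t) ν ∧ 0 ≤ s ∧ dist (ν s) (β.1 (n:ℝ)) ≤ R'' := by
    intro n hn
    set p := β.1 (n:ℝ) with hp
    have hdxp : dist x0 p = (n:ℝ) := BM.ray_dist β.2 (Nat.cast_nonneg n)
    have hpK : p ∈ ⋃ g : G, (fun x : X => g • x) '' K := by rw [hcov]; trivial
    simp only [Set.mem_iUnion, Set.mem_image] at hpK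
    obtain ⟨h, kp, hkp, hhkp⟩ := hpK
    set w0 := h • x0 with hw0
    have hw0p : dist w0 p ≤ C2 := by
      rw [← hhkp]
      calc dist (h • x0) (h • kp) = dist x0 kp := (hGA.isometry h).dist_eq _ _
        _ ≤ dist x0 k0 + dist k0 kp := dist_triangle _ _ _
        _ ≤ dist x0 k0 + DK := by
            have := hKD hkp
            rw [mem_closedBall, dist_comm] at this
            linarith
        _ = C2 := rfl
    set rr := h * g0 * h⁻¹ with hrr
    set W := {x : X | rr • x = x} with hW
    have hWF : ∀ z : X, (rr • z = z) ↔ (g0 • (h⁻¹ • z) = h⁻¹ • z) := by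
      intro z
      rw [hrr, mul_smul, mul_smul]
      constructor
      · intro hz
        have := congrArg (fun w : X => h⁻¹ • w) hz
        simpa using this
      · intro hz
        have := congrArg (fun w : X => h • w) hz
        simpa [smul_inv_smul] using this
    have hWball : ∀ z ∈ W, dist w0 z ≤ R1 := by
      intro z hz
      have hzf : g0 • (h⁻¹ • z) = h⁻¹ • z := (hWF z).mp hz
      have := hR1 _ hzf
      calc dist w0 z = dist (h • x0) (h • (h⁻¹ • z)) := by rw [smul_inv_smul]
        _ = dist x0 (h⁻¹ • z) := (hGA.isometry h).dist_eq _ _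
        _ ≤ R1 := this
    have hx0w0 : R1 + 1 < dist x0 w0 := by
      have htr := dist_triangle x0 w0 p
      linarith
    have hx0W : x0 ∉ W := by
      intro hx0
      have := hWball x0 hx0
      rw [dist_comm] at this
      linarith
    have hx0Wc : x0 ∈ Wᶜ := hx0W
    have hWinv : rr • Wᶜ = Wᶜ := by
      ext z
      rw [mem_smul_set_iff_inv_smul_mem]
      simp only [Set.mem_compl_iff, hW, Set.mem_setOf_eq]
      constructor
      · intro h1 h2
        apply h1
        have h3 : rr⁻¹ • z = z := by
          have := congrArg (fun w : X => rr⁻¹ • w) h2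
          simpa using this.symm
        rw [h3]
        exact h2
      · intro h1 h2
        apply h1
        have := congrArg (fun w : X => rr • w) h2
        simpa [smul_inv_smul] using this
    have hx0F : h⁻¹ • x0 ∈ {x : X | g0 • x = x}ᶜ := by
      simp only [Set.mem_compl_iff, Set.mem_setOf_eq]
      intro hfix
      exact hx0W ((hWF x0).mpr hfix)
    have hWc : Wᶜ = h • ({x : X | g0 • x = x}ᶜ) := by
      ext z
      rw [mem_smul_set_iff_inv_smul_mem]
      simp only [Set.mem_compl_iff, hW, Set.mem_setOf_eq]
      exact not_congr (hWF z)
    have hA0C : connectedComponentIn Wᶜ x0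
        = h • connectedComponentIn ({x : X | g0 • x = x}ᶜ) (h⁻¹ • x0) := by
      rw [BM.smul_connectedComponentIn hGA h _ _, smul_inv_smul, ← hWc]
    have hA0ne : rr • connectedComponentIn Wᶜ x0 ≠ connectedComponentIn Wᶜ x0 := by
      rw [hA0C]
      intro hEq
      have h1 : rr • (h • connectedComponentIn ({x : X | g0 • x = x}ᶜ) (h⁻¹ • x0))
          = h • (g0 • connectedComponentIn ({x : X | g0 • x = x}ᶜ) (h⁻¹ • x0)) := by
        rw [smul_smul, smul_smul, hrr]
        congr 1
        group
      rw [h1] at hEq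
      have h2 : g0 • connectedComponentIn ({x : X | g0 • x = x}ᶜ) (h⁻¹ • x0)
          = connectedComponentIn ({x : X | g0 • x = x}ᶜ) (h⁻¹ • x0) := by
        have := congrArg (fun S : Set X => h⁻¹ • S) hEq
        simpa [inv_smul_smul] using this
      exact (hcomp (h⁻¹ • x0) hx0F).2 h2
    -- chain lemma
    have hchain : ∀ (μ : ℝ → X), IsGeodesicRayFrom x0 μ →
        (∀ s : ℝ, 0 ≤ s → R1 + 1 < dist (μ s) w0) → ∀ T : ℝ, 0 ≤ T →
        μ T ∈ connectedComponentIn Wᶜ x0 := by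
      intro μ hμ havoid T hT
      have himg : IsPreconnected (μ '' Set.Icc 0 T) :=
        isPreconnected_Icc.image μ (BM.ray_continuousOn hμ)
      have hsub : μ '' Set.Icc 0 T ⊆ Wᶜ := by
        rintro z ⟨s, hs, rfl⟩
        intro hzW
        have h1 := hWball _ hzW
        have h2 := havoid s hs.1
        rw [dist_comm] at h1
        linarith
      have hx0img : x0 ∈ μ '' Set.Icc 0 T := ⟨0, ⟨le_rfl, hT⟩, hμ.1⟩
      exact (himg.subset_connectedComponentIn hx0img hsub) ⟨T, ⟨hT, le_rfl⟩, rfl⟩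
    by_cases hcase1 : ∃ s : ℝ, 0 ≤ s ∧ dist (α.1 s) w0 ≤ R1 + 1
    · obtain ⟨s, hs0, hs⟩ := hcase1
      refine ⟨α.1, 1, s, α.2, ⟨0, fun t ht => by simp⟩, hs0, ?_⟩
      calc dist (α.1 s) p ≤ dist (α.1 s) w0 + dist w0 p := dist_triangle _ _ _
        _ ≤ (R1+1) + C2 := add_le_add hs hw0p
        _ = R'' := by rw [hR'']
    · push_neg at hcase1
      have hγray : IsGeodesicRayFrom (rr • x0) (fun t => rr • α.1 t) := by
        constructor
        · show rr • α.1 0 = rr • x0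
          rw [α.2.1]
        · intro s t hs ht
          rw [(hGA.isometry rr).dist_eq]
          exact α.2.2 s t hs ht
      obtain ⟨ν, hνray, hνasym⟩ := BM.asymptotic_ray hGA hCAT x0 (rr • x0) _ hγray
      set Cg := dist x0 (rr • x0) + 1 with hCg
      have hCg0 : 0 ≤ Cg := by rw [hCg]; positivity
      by_cases hcase2 : ∃ s : ℝ, 0 ≤ s ∧ dist (ν s) w0 ≤ R1 + 1
      · obtain ⟨s, hs0, hs⟩ := hcase2
        refine ⟨ν, rr, s, hνray, ⟨Cg, fun t ht => by rw [dist_comm]; exact hνasym t ht⟩, hs0, ?_⟩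
        calc dist (ν s) p ≤ dist (ν s) w0 + dist w0 p := dist_triangle _ _ _
          _ ≤ (R1+1) + C2 := add_le_add hs hw0p
          _ = R'' := by rw [hR'']
      · exfalso
        push_neg at hcase2
        set T0 := dist x0 w0 + R1 + Cg + 1 with hT0
        have hT00 : 0 ≤ T0 := by
          rw [hT0]
          have := dist_nonneg (x := x0) (y := w0)
          linarith
        have hνT0 : ν T0 ∈ connectedComponentIn Wᶜ x0 :=
          hchain ν hνray (fun s hs => hcase2 s hs) T0 hT00
        have hαT0 : α.1 T0 ∈ connectedComponentIn Wᶜ x0 :=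
          hchain α.1 α.2 (fun s hs => hcase1 s hs) T0 hT00
        have hσgeo := hgeo (ν T0) (rr • α.1 T0)
        have hdνγ : dist (ν T0) (rr • α.1 T0) ≤ Cg := hνasym T0 hT00
        have hdistν : dist x0 (ν T0) = T0 := BM.ray_dist hνray hT00
        have hfar : R1 + Cg + 1 ≤ dist (ν T0) w0 := by
          have htr := dist_triangle x0 w0 (ν T0)
          rw [dist_comm (ν T0) w0]
          linarith
        have hσsub : (geo (ν T0) (rr • α.1 T0)) '' Set.Icc 0 (dist (ν T0) (rr • α.1 T0)) ⊆ Wᶜ := by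
          rintro z ⟨s, hsm, rfl⟩
          intro hzW
          have h1 : dist (ν T0) (geo (ν T0) (rr • α.1 T0) s) = s :=
            BM.geo_dist_from_start hσgeo hsm
          have h2 := hWball _ hzW
          have h3 : s ≤ dist (ν T0) (rr • α.1 T0) := hsm.2
          have h4 := dist_triangle (ν T0) (geo (ν T0) (rr • α.1 T0) s) w0
          rw [dist_comm w0] at h2
          linarith
        have hσpre : IsPreconnected ((geo (ν T0) (rr • α.1 T0)) ''
            Set.Icc 0 (dist (ν T0) (rr • α.1 T0))) :=
          isPreconnected_Icc.image _ (BM.geo_continuousOn hσgeo)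
        have hν_in : ν T0 ∈ (geo (ν T0) (rr • α.1 T0)) ''
            Set.Icc 0 (dist (ν T0) (rr • α.1 T0)) :=
          ⟨0, ⟨le_rfl, dist_nonneg⟩, hσgeo.1⟩
        have hsubcomp := hσpre.subset_connectedComponentIn hν_in hσsub
        have hγT0mem : rr • α.1 T0 ∈ connectedComponentIn Wᶜ (ν T0) :=
          hsubcomp ⟨dist (ν T0) (rr • α.1 T0), ⟨dist_nonneg, le_rfl⟩, hσgeo.2.1⟩
        have hcompν : connectedComponentIn Wᶜ x0 = connectedComponentIn Wᶜ (ν T0) :=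
          connectedComponentIn_eq hνT0
        have hγT0A0 : rr • α.1 T0 ∈ connectedComponentIn Wᶜ x0 := by
          rw [hcompν]
          exact hγT0mem
        have hcompα : connectedComponentIn Wᶜ x0 = connectedComponentIn Wᶜ (α.1 T0) :=
          connectedComponentIn_eq hαT0
        have hrrA0 : rr • connectedComponentIn Wᶜ x0 = connectedComponentIn Wᶜ (rr • α.1 T0) := by
          rw [hcompα, BM.smul_connectedComponentIn hGA rr Wᶜ (α.1 T0), hWinv]
        have hfin : connectedComponentIn Wᶜ (rr • α.1 T0) = connectedComponentIn Wᶜ x0 :=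
          (connectedComponentIn_eq hγT0A0).symm
        exact hA0ne (hrrA0.trans hfin)
  -- assembly
  have hA3 : ∀ (μ : ℝ → X), IsGeodesicRayFrom x0 μ → ∀ T t : ℝ, 0 < T → 0 ≤ t → t ≤ T →
      dist (μ t) (β.1 t) ≤ (t/T) * dist (μ T) (β.1 T) := by
    intro μ hμ T t hT ht htT
    have h1 := BM.convex_common hCAT (BM.ray_restrict hμ hT.le) (BM.ray_restrict β.2 hT.le)
      (t := t/T) ⟨div_nonneg ht hT.le, (div_le_one hT).mpr htT⟩
    rw [BM.ray_dist hμ hT.le, BM.ray_dist β.2 hT.le, div_mul_cancel₀ t (ne_of_gt hT)] at h1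
    exact h1
  obtain ⟨N0, hN0⟩ := exists_nat_ge (R1 + C2 + 2)
  have hMn : ∀ n : ℕ, R1 + C2 + 2 ≤ ((n + N0 : ℕ) : ℝ) := by
    intro n
    push_cast
    have : (0:ℝ) ≤ (n:ℝ) := Nat.cast_nonneg n
    linarith
  choose ν gg ss hray hasym hs0 hsd using fun n : ℕ => core (n + N0) (hMn n)
  have hd2R : ∀ n : ℕ, dist (ν n ((n+N0 : ℕ):ℝ)) (β.1 ((n+N0:ℕ):ℝ)) ≤ 2*R'' := by
    intro n
    set m : ℝ := ((n+N0:ℕ):ℝ) with hm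
    have hm0 : (0:ℝ) ≤ m := Nat.cast_nonneg _
    have h1 : dist x0 (ν n (ss n)) = ss n := BM.ray_dist (hray n) (hs0 n)
    have h2 : dist x0 (β.1 m) = m := BM.ray_dist β.2 hm0
    have h3 : |ss n - m| ≤ R'' := by
      have habs := abs_dist_sub_le (ν n (ss n)) (β.1 m) x0
      rw [dist_comm (ν n (ss n)) x0, dist_comm (β.1 m) x0, h1, h2] at habs
      exact le_trans habs (hsd n)
    have h4 : dist (ν n m) (ν n (ss n)) = |m - ss n| := (hray n).2 m (ss n) hm0 (hs0 n)
    calc dist (ν n m) (β.1 m)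
        ≤ dist (ν n m) (ν n (ss n)) + dist (ν n (ss n)) (β.1 m) := dist_triangle _ _ _
      _ ≤ |m - ss n| + R'' := by rw [h4]; exact add_le_add le_rfl (hsd n)
      _ ≤ R'' + R'' := by
          rw [abs_sub_comm]
          linarith
      _ = 2*R'' := by ring
  have huray : ∀ n : ℕ, IsGeodesicRayFrom x0 (fun t => if t < 0 then β.1 t else ν n t) := by
    intro n
    constructor
    · show (if (0:ℝ) < 0 then β.1 0 else ν n 0) = x0
      rw [if_neg (lt_irrefl (0:ℝ))]
      exact (hray n).1
    · intro s t hs ht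
      show dist (if s < 0 then β.1 s else ν n s) (if t < 0 then β.1 t else ν n t) = |s - t|
      rw [if_neg (not_lt.mpr hs), if_neg (not_lt.mpr ht)]
      exact (hray n).2 s t hs ht
  set u : ℕ → Boundary X x0 := fun n =>
    ⟨fun t => if t < 0 then β.1 t else ν n t, huray n⟩ with hu
  have hmem : ∀ n : ℕ, u n ∈ {b : Boundary X x0 | ∃ g : G, AsymptoticMaps (fun t => g • α.1 t) b.1} := by
    intro n
    obtain ⟨C, hC⟩ := hasym n
    refine ⟨gg n, C, fun t ht => ?_⟩
    simp only [hu]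
    rw [if_neg (not_lt.mpr ht)]
    exact hC t ht
  have htendsto : Tendsto u atTop (nhds β) := by
    rw [tendsto_subtype_rng]
    rw [tendsto_pi_nhds]
    intro t
    by_cases ht : t < 0
    · simp only [hu, if_pos ht]
      exact tendsto_const_nhds
    · push_neg at ht
      rw [tendsto_iff_dist_tendsto_zero]
      apply squeeze_zero' (g := fun n : ℕ => t/(n:ℝ) * (2*R''))
      · exact Filter.Eventually.of_forall (fun n => dist_nonneg)
      · filter_upwards [eventually_ge_atTop (max 1 (Nat.ceil t))] with n hn
        have hn1 : 1 ≤ n := le_trans (le_max_left _ _) hn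
        have hn1' : (1:ℝ) ≤ (n:ℝ) := by exact_mod_cast hn1
        have hnpos : (0:ℝ) < (n:ℝ) := by linarith
        have hnt : t ≤ (n:ℝ) := by
          calc t ≤ (Nat.ceil t : ℝ) := Nat.le_ceil t
            _ ≤ (n:ℝ) := Nat.cast_le.mpr (le_trans (le_max_right _ _) hn)
        set m : ℝ := ((n+N0:ℕ):ℝ) with hm
        have hnm : (n:ℝ) ≤ m := by
          rw [hm]
          push_cast
          have : (0:ℝ) ≤ (N0:ℝ) := Nat.cast_nonneg _
          linarith
        have hmpos : (0:ℝ) < m := lt_of_lt_of_le hnpos hnm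
        have htm : t ≤ m := le_trans hnt hnm
        simp only [hu, if_neg (not_lt.mpr ht)]
        have h5 := hA3 (ν n) (hray n) m t hmpos ht htm
        have h6 := hd2R n
        have h7 : (t/m) * dist (ν n m) (β.1 m) ≤ (t/(n:ℝ)) * (2*R'') :=
          mul_le_mul (div_le_div_of_nonneg_left ht hnpos hnm) h6 dist_nonneg
            (div_nonneg ht hnpos.le)
        linarith
      · have := (tendsto_const_div_atTop_nhds_zero_nat t).mul_const (2*R'')
        simpa [div_mul_eq_mul_div] using this
  exact mem_closure_of_tendsto htendsto (Filter.Eventually.of_forall hmem)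
end

section
/- Suppose a group G acts geometrically on a CAT(0) space X. Then for every g ∈ G the fixed-point set ℱ_g = {α ∈ ∂X : gα = α} of g on the boundary equals the limit set L(Z_g) of the centralizer Z_g of g. Moreover, ℱ_g = ∅ if and only if Z_g is finite. -/
open Metric Set Filter Pointwise

/-!
A geometric action on a geodesic space forces `X` to be proper, so only finitely many elements
of `G` move `x0` a bounded distance.

If `a n ∈ Z_g` and `a n • x0 → β`, then `g` moves both ends of the segment `[x0, a n • x0]`
by `d(x0, g • x0)`, hence, by convexity of the CAT(0) metric, every point of it; in the limit
`g` moves the ray to `β` a bounded distance, i.e. fixes `β`. Conversely, if `g` fixes `α`, pick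
`b n` with `b n • x0` near `α n`. The conjugates `(b n)⁻¹ g b n` move `x0` a bounded distance,
so one of them recurs along a subsequence `n k`; then `b (n k) * (b (n 0))⁻¹ ∈ Z_g`, and its
orbit points stay near the ray, hence converge to `α`. An infinite centralizer has orbit points
going to infinity, which accumulate at a boundary point by compactness of `X ∪ ∂X`, and that
point is fixed; a finite centralizer has a bounded orbit, so no limit points.
-/

open scoped Topology NNReal

namespace IsGeodesicFromTo

variable {X : Type*} [MetricSpace X] {f : ℝ → X} {x y : X}

lemma dist_left (hf : IsGeodesicFromTo f x y) {s : ℝ} (hs : s ∈ Icc 0 (dist x y)) :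
    dist x (f s) = s := by
  rw [← hf.1, hf.2.2 0 ⟨le_rfl, dist_nonneg⟩ s hs, zero_sub, abs_neg, abs_of_nonneg hs.1]

lemma dist_right (hf : IsGeodesicFromTo f x y) {s : ℝ} (hs : s ∈ Icc 0 (dist x y)) :
    dist (f s) y = dist x y - s := by
  rw [← hf.2.1, hf.2.2 s hs _ ⟨dist_nonneg, le_rfl⟩, hf.2.1, abs_of_nonpos (by linarith [hs.2]),
    neg_sub]

lemma symm (hf : IsGeodesicFromTo f x y) :
    IsGeodesicFromTo (fun s => f (dist x y - s)) y x := by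
  unfold IsGeodesicFromTo
  rw [dist_comm y x]
  refine ⟨by simpa using hf.2.1, by simpa using hf.1, fun s hs t ht => ?_⟩
  have hs' : dist x y - s ∈ Icc 0 (dist x y) := ⟨by linarith [hs.2], by linarith [hs.1]⟩
  have ht' : dist x y - t ∈ Icc 0 (dist x y) := ⟨by linarith [ht.2], by linarith [ht.1]⟩
  rw [hf.2.2 _ hs' _ ht', ← abs_neg]
  ring_nf

lemma comp_isometry {Y : Type*} [MetricSpace Y] (hf : IsGeodesicFromTo f x y) {φ : X → Y}
    (hφ : Isometry φ) : IsGeodesicFromTo (φ ∘ f) (φ x) (φ y) := by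
  rw [IsGeodesicFromTo, hφ.dist_eq]
  exact ⟨congrArg φ hf.1, congrArg φ hf.2.1, fun s hs t ht => by
    rw [Function.comp_apply, Function.comp_apply, hφ.dist_eq, hf.2.2 s hs t ht]⟩

lemma lipschitzWith_comp_projIcc (hf : IsGeodesicFromTo f x y) :
    LipschitzWith 1 (fun t => f (projIcc 0 (dist x y) dist_nonneg t)) := by
  refine LipschitzWith.of_dist_le_mul fun s t => ?_
  rw [hf.2.2 _ (projIcc _ _ _ s).2 _ (projIcc _ _ _ t).2, NNReal.coe_one, one_mul,
    ← Real.dist_eq, ← Subtype.dist_eq]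
  simpa using (LipschitzWith.projIcc (dist_nonneg (x := x) (y := y))).dist_le_mul s t

end IsGeodesicFromTo

lemma IsGeodesicRayFrom.dist_eq {X : Type*} [MetricSpace X] {x0 : X} {ξ : ℝ → X}
    (hξ : IsGeodesicRayFrom x0 ξ) {t : ℝ} (ht : 0 ≤ t) : dist x0 (ξ t) = t := by
  rw [← hξ.1, hξ.2 0 t le_rfl ht, zero_sub, abs_neg, abs_of_nonneg ht]

lemma IsGeodesicRayFrom.isGeodesicFromTo {X : Type*} [MetricSpace X] {x0 : X} {ξ : ℝ → X}
    (hξ : IsGeodesicRayFrom x0 ξ) {t : ℝ} (ht : 0 ≤ t) : IsGeodesicFromTo ξ x0 (ξ t) := by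
  rw [IsGeodesicFromTo, hξ.dist_eq ht]
  exact ⟨hξ.1, rfl, fun s hs r hr => hξ.2 s r hs.1 hr.1⟩

lemma IsGeodesicSpace.exists_dist_le_dist_le {X : Type*} [MetricSpace X]
    (hX : IsGeodesicSpace X) {x z : X} {a b : ℝ} (ha : 0 ≤ a) (hb : 0 ≤ b)
    (h : dist x z ≤ a + b) : ∃ y, dist x y ≤ a ∧ dist y z ≤ b := by
  obtain ⟨f, hf⟩ := hX x z
  have hs : max 0 (dist x z - b) ∈ Icc 0 (dist x z) :=
    ⟨le_max_left _ _, max_le dist_nonneg (by linarith)⟩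
  refine ⟨f (max 0 (dist x z - b)), ?_, ?_⟩
  · rw [hf.dist_left hs]; exact max_le ha (by linarith)
  · rw [hf.dist_right hs]; linarith [le_max_right 0 (dist x z - b)]

namespace IsCAT0Space

variable {X : Type*} [MetricSpace X]

lemma dist_geodesic_le_same_start (hX : IsCAT0Space X) {x y y' : X} {f h : ℝ → X}
    (hf : IsGeodesicFromTo f x y) (hh : IsGeodesicFromTo h x y') {t : ℝ} (ht : t ∈ Icc 0 1) :
    dist (f (t * dist x y)) (h (t * dist x y')) ≤ t * dist y y' := by
  set z := h (t * dist x y')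
  have hzx : dist z x = t * dist x y' := by
    rw [dist_comm]
    exact hh.dist_left ⟨mul_nonneg ht.1 dist_nonneg, mul_le_of_le_one_left dist_nonneg ht.2⟩
  have h1 := hX.2 x y z f hf t ht
  have h2 := hX.2 x y' y h hh t ht
  rw [hzx, dist_comm z y] at h1
  rw [dist_comm y x] at h2
  rw [dist_comm, ← pow_le_pow_iff_left₀ dist_nonneg (mul_nonneg ht.1 dist_nonneg) two_ne_zero]
  nlinarith [mul_le_mul_of_nonneg_left h2 ht.1, ht.1, ht.2, dist_nonneg (x := x) (y := y')]

lemma dist_geodesic_le_same_end (hX : IsCAT0Space X) {x x' y : X} {f h : ℝ → X}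
    (hf : IsGeodesicFromTo f x y) (hh : IsGeodesicFromTo h x' y) {t : ℝ} (ht : t ∈ Icc 0 1) :
    dist (f (t * dist x y)) (h (t * dist x' y)) ≤ (1 - t) * dist x x' := by
  have key := hX.dist_geodesic_le_same_start hf.symm hh.symm (t := 1 - t)
    ⟨by linarith [ht.2], by linarith [ht.1]⟩
  rw [dist_comm y x, dist_comm y x'] at key
  convert key using 3 <;> ring

lemma dist_geodesic_le (hX : IsCAT0Space X) {x y x' y' : X} {f h : ℝ → X}
    (hf : IsGeodesicFromTo f x y) (hh : IsGeodesicFromTo h x' y') {t : ℝ} (ht : t ∈ Icc 0 1) :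
    dist (f (t * dist x y)) (h (t * dist x' y')) ≤ (1 - t) * dist x x' + t * dist y y' := by
  obtain ⟨k, hk⟩ := hX.1 x y'
  calc dist (f (t * dist x y)) (h (t * dist x' y'))
      ≤ dist (f (t * dist x y)) (k (t * dist x y')) +
        dist (k (t * dist x y')) (h (t * dist x' y')) := dist_triangle _ _ _
    _ ≤ t * dist y y' + (1 - t) * dist x x' :=
        add_le_add (hX.dist_geodesic_le_same_start hf hk ht)
          (hX.dist_geodesic_le_same_end hk hh ht)
    _ = (1 - t) * dist x x' + t * dist y y' := add_comm _ _

lemma dist_geodesic_le_max (hX : IsCAT0Space X) {x y x' y' : X} {f h : ℝ → X}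
    (hf : IsGeodesicFromTo f x y) (hh : IsGeodesicFromTo h x' y')
    (hd : dist x' y' = dist x y) {s : ℝ} (hs : s ∈ Icc 0 (dist x y)) :
    dist (f s) (h s) ≤ max (dist x x') (dist y y') := by
  rcases (dist_nonneg (x := x) (y := y)).eq_or_lt with hxy | hxy
  · obtain rfl : s = 0 := le_antisymm (hxy ▸ hs.2) hs.1
    rw [hf.1, hh.1]
    exact le_max_left _ _
  · have ht : s / dist x y ∈ Icc 0 1 := ⟨div_nonneg hs.1 hxy.le, div_le_one_of_le₀ hs.2 hxy.le⟩
    have hts : s / dist x y * dist x y = s := div_mul_cancel₀ s hxy.ne'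
    have key := hX.dist_geodesic_le hf hh ht
    rw [hd, hts] at key
    refine key.trans ?_
    nlinarith [le_max_left (dist x x') (dist y y'), le_max_right (dist x x') (dist y y'),
      ht.1, ht.2]

lemma eq_of_isGeodesicFromTo (hX : IsCAT0Space X) {x y : X} {f h : ℝ → X}
    (hf : IsGeodesicFromTo f x y) (hh : IsGeodesicFromTo h x y) {s : ℝ}
    (hs : s ∈ Icc 0 (dist x y)) : f s = h s :=
  dist_le_zero.1 <| (hX.dist_geodesic_le_max hf hh rfl hs).trans_eq (by simp)

lemma dist_geodesic_le_of_same_start (hX : IsCAT0Space X) {x y z : X} {f h : ℝ → X}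
    (hf : IsGeodesicFromTo f x y) (hh : IsGeodesicFromTo h x z) {t : ℝ} (ht : 0 ≤ t)
    (hty : t ≤ dist x y) (htz : t ≤ dist x z) (hz : 0 < dist x z) :
    dist (f t) (h t) ≤ 2 * (t / dist x z) * dist y z := by
  set τ := t / dist x z
  have hτ : τ ∈ Icc 0 1 := ⟨div_nonneg ht hz.le, div_le_one_of_le₀ htz hz.le⟩
  have hτz : τ * dist x z = t := div_mul_cancel₀ t hz.ne'
  have hcomp := hX.dist_geodesic_le_same_start hf hh hτ
  rw [hτz] at hcomp
  have hshift : dist (f t) (f (τ * dist x y)) ≤ τ * dist y z := by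
    rw [hf.2.2 t ⟨ht, hty⟩ _ ⟨mul_nonneg hτ.1 dist_nonneg, mul_le_of_le_one_left dist_nonneg hτ.2⟩,
      ← hτz, ← mul_sub, abs_mul, abs_of_nonneg hτ.1]
    refine mul_le_mul_of_nonneg_left ?_ hτ.1
    rw [dist_comm x z, dist_comm x y, dist_comm y z]
    exact abs_dist_sub_le z y x
  linarith [dist_triangle (f t) (f (τ * dist x y)) (h t)]

end IsCAT0Space

lemma IsGeodesicSpace.properSpace {X : Type*} [MetricSpace X] (hX : IsGeodesicSpace X) {ε : ℝ}
    (hε : 0 < ε) (hcpt : ∀ x : X, IsCompact (closedBall x ε)) : ProperSpace X := by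
  have key : ∀ (x : X) (n : ℕ), IsCompact (closedBall x (n * (ε / 2))) := by
    intro x n
    induction n with
    | zero => simp
    | succ n ih =>
      -- cover by the `ε`-balls around a finite `ε / 2`-net of the previous ball
      obtain ⟨t, -, ht, hcover⟩ := finite_cover_balls_of_compact ih (half_pos hε)
      refine (ht.isCompact_biUnion fun y _ => hcpt y).of_isClosed_subset isClosed_closedBall ?_
      intro z hz
      obtain ⟨w, hxw, hwz⟩ := hX.exists_dist_le_dist_le (x := x) (z := z) (a := n * (ε / 2))
        (by positivity) (half_pos hε).le (by rw [mem_closedBall'] at hz; push_cast at hz; linarith)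
      obtain ⟨y, hy, hwy⟩ := mem_iUnion₂.1 (hcover (mem_closedBall'.2 hxw))
      refine mem_iUnion₂.2 ⟨y, hy, ?_⟩
      rw [mem_closedBall]
      linarith [dist_triangle z w y, mem_ball.1 hwy, dist_comm w z]
  refine ⟨fun x r => (key x ⌈r / (ε / 2)⌉₊).of_isClosed_subset isClosed_closedBall
    (closedBall_subset_closedBall ?_)⟩
  exact (div_le_iff₀ (half_pos hε)).1 (Nat.le_ceil _)

namespace IsGeometricAction

variable {G X : Type*} [Group G] [MetricSpace X] [MulAction G X]

lemma exists_smul_eq_of_tendsto (hGA : IsGeometricAction G X) {g : ℕ → G} {x y : X}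
    (h : Tendsto (fun n => g n • x) atTop (𝓝 y)) : ∃ n, g n • x = y := by
  set C := insert x (insert y (range fun n => g n • x))
  have hC : IsCompact C := h.isCompact_insert_range.insert x
  have hg : range g ⊆ {g : G | ((fun z : X => g • z) '' C ∩ C).Nonempty} := by
    rintro _ ⟨n, rfl⟩
    exact ⟨g n • x, mem_image_of_mem _ (mem_insert x _),
      mem_insert_of_mem _ (mem_insert_of_mem _ (mem_range_self n))⟩
  have hfin : (range fun n => dist (g n • x) y).Finite := by
    refine (((hGA.proper C hC).subset hg).image fun g => dist (g • x) y).subset ?_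
    rintro _ ⟨n, rfl⟩
    exact ⟨g n, mem_range_self n, rfl⟩
  obtain ⟨n, hn⟩ := hfin.isClosed.mem_of_tendsto (tendsto_iff_dist_tendsto_zero.1 h)
    (Eventually.of_forall mem_range_self)
  exact ⟨n, dist_eq_zero.1 hn⟩

lemma exists_pos_forall_dist_lt (hGA : IsGeometricAction G X) {K : Set X} (hK : IsCompact K) :
    ∃ ε > 0, ∀ (g : G), ∀ k ∈ K, ∀ k' ∈ K, dist (g • k) k' < ε →
      ((fun z : X => g • z) '' K ∩ K).Nonempty := by
  by_contra! hcon
  choose g k hk k' hk' hlt hempty using fun n : ℕ => hcon (1 / (n + 1)) Nat.one_div_pos_of_nat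
  obtain ⟨⟨l, l'⟩, ⟨hl, hl'⟩, φ, hφ, hlim⟩ :=
    (hK.prod hK).tendsto_subseq (x := fun n => (k n, k' n)) fun n => ⟨hk n, hk' n⟩
  have hk_lim : Tendsto (fun n => k (φ n)) atTop (𝓝 l) := (continuous_fst.tendsto _).comp hlim
  have hk'_lim : Tendsto (fun n => k' (φ n)) atTop (𝓝 l') := (continuous_snd.tendsto _).comp hlim
  have hgl : Tendsto (fun n => g (φ n) • l) atTop (𝓝 l') := by
    rw [tendsto_iff_dist_tendsto_zero] at hk_lim hk'_lim ⊢
    have hsmall : Tendsto (fun n => 1 / ((φ n : ℝ) + 1)) atTop (𝓝 0) :=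
      tendsto_one_div_add_atTop_nhds_zero_nat.comp hφ.tendsto_atTop
    refine squeeze_zero (fun _ => dist_nonneg) (fun n => ?_)
      ((hk_lim.add hsmall).add hk'_lim |>.trans_eq (by simp only [add_zero]))
    calc dist (g (φ n) • l) l'
        ≤ dist (g (φ n) • l) (g (φ n) • k (φ n)) + dist (g (φ n) • k (φ n)) (k' (φ n))
          + dist (k' (φ n)) l' := dist_triangle4 _ _ _ _
      _ ≤ dist (k (φ n)) l + 1 / ((φ n : ℝ) + 1) + dist (k' (φ n)) l' := by
        rw [(hGA.isometry _).dist_eq, dist_comm l]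
        gcongr
        exact (hlt (φ n)).le
  obtain ⟨n, hn⟩ := hGA.exists_smul_eq_of_tendsto hgl
  have hmeet : ((fun z : X => g (φ n) • z) '' K ∩ K).Nonempty := ⟨l', ⟨l, hl, hn⟩, hl'⟩
  exact hmeet.ne_empty (hempty (φ n))

lemma exists_pos_isCompact_closedBall (hGA : IsGeometricAction G X) :
    ∃ ε > 0, ∀ x : X, IsCompact (closedBall x ε) := by
  obtain ⟨K, hK, hcover⟩ := hGA.cocompact
  obtain ⟨ε, hε, hsep⟩ := hGA.exists_pos_forall_dist_lt hK
  have hmem : ∀ z : X, ∃ g : G, ∃ k ∈ K, g • k = z := fun z => by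
    obtain ⟨g, k, hk, hgk⟩ := mem_iUnion.1 (hcover ▸ mem_univ z)
    exact ⟨g, k, hk, hgk⟩
  refine ⟨ε / 2, half_pos hε, fun x => ?_⟩
  obtain ⟨h, k₀, hk₀, rfl⟩ := hmem x
  set F := {g : G | ((fun z : X => g • z) '' K ∩ K).Nonempty}
  refine ((hGA.proper K hK).isCompact_biUnion fun f _ =>
    hK.image (hGA.isometry (h * f⁻¹)).continuous).of_isClosed_subset isClosed_closedBall ?_
  intro z hz
  obtain ⟨g, k, hk, rfl⟩ := hmem z
  have hF : g⁻¹ * h ∈ F := by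
    refine hsep _ k₀ hk₀ k hk ?_
    rw [mul_smul, ← (hGA.isometry g).dist_eq, smul_inv_smul, dist_comm]
    exact (mem_closedBall.1 hz).trans_lt (half_lt_self hε)
  exact mem_biUnion hF ⟨k, hk, by simp⟩

lemma properSpace (hGA : IsGeometricAction G X) (hX : IsGeodesicSpace X) : ProperSpace X :=
  let ⟨_, hε, hcpt⟩ := hGA.exists_pos_isCompact_closedBall
  hX.properSpace hε hcpt

lemma finite_setOf_dist_smul_le [ProperSpace X] (hGA : IsGeometricAction G X) (x : X) (r : ℝ) :
    {g : G | dist x (g • x) ≤ r}.Finite :=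
  (hGA.proper _ (isCompact_closedBall x r)).subset fun g hg =>
    ⟨g • x, mem_image_of_mem _ (mem_closedBall_self ((dist_nonneg).trans hg)),
      mem_closedBall'.2 hg⟩

lemma exists_dist_smul_le (hGA : IsGeometricAction G X) (x : X) :
    ∃ D, ∀ y : X, ∃ g : G, dist (g • x) y ≤ D := by
  obtain ⟨K, hK, hcover⟩ := hGA.cocompact
  obtain ⟨D, hD⟩ := hK.isBounded.subset_closedBall x
  refine ⟨D, fun y => ?_⟩
  obtain ⟨g, k, hk, rfl⟩ := mem_iUnion.1 (hcover ▸ mem_univ y)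
  exact ⟨g, by rw [(hGA.isometry g).dist_eq, dist_comm]; exact hD hk⟩

end IsGeometricAction

lemma exists_subseq_tendsto_of_lipschitzWith {X : Type*} [MetricSpace X] [ProperSpace X]
    {u : ℕ → ℝ → X} {K : ℝ≥0} (hu : ∀ n, LipschitzWith K (u n)) {x0 : X}
    (hu0 : ∀ n, u n 0 = x0) :
    ∃ ψ : ℕ → ℕ, StrictMono ψ ∧ ∃ ξ : ℝ → X, ∀ t, Tendsto (fun k => u (ψ k) t) atTop (𝓝 (ξ t)) := by
  have hS : IsCompact (univ.pi fun t : ℝ => closedBall x0 (K * |t|)) :=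
    isCompact_univ_pi fun t => isCompact_closedBall _ _
  have hmem : ∀ n, u n ∈ univ.pi fun t : ℝ => closedBall x0 (K * |t|) := fun n t _ => by
    simpa [hu0 n, Real.dist_eq] using (hu n).dist_le_mul t 0
  obtain ⟨ξ, -, hξ⟩ :=
    hS.exists_mapClusterPt (f := atTop) (tendsto_principal.2 (Eventually.of_forall hmem))
  have hξK : LipschitzWith K ξ :=
    (isClosed_setOfPred_lipschitzWith K).mem_of_mapClusterPt hξ (Eventually.of_forall hu)
  -- extract along the rationals, where the product topology is first countable
  have hres : Continuous fun (f : ℝ → X) (q : ℚ) => f q := continuous_pi fun q => continuous_apply _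
  obtain ⟨ψ, hψ, hlim⟩ := (hξ.continuousAt_comp hres.continuousAt).tendsto_subseq
  refine ⟨ψ, hψ, ξ, fun t => ?_⟩
  have hclosed := ((LipschitzWith.uniformEquicontinuous (fun k => u (ψ k)) K fun k =>
    hu (ψ k)).equicontinuous.isClosed_setOfPred_tendsto (l := atTop) hξK.continuous)
  have hdense : Dense {t | Tendsto (fun k => u (ψ k) t) atTop (𝓝 (ξ t))} :=
    Rat.denseRange_cast.mono <| range_subset_iff.2 fun q => tendsto_pi_nhds.1 hlim q
  exact hclosed.closure_subset (hdense t)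

section Boundary

variable {X : Type*} [MetricSpace X] {x0 : X}

lemma tendstoBoundary_of_dist_le (hX : IsCAT0Space X) (β : Boundary X x0) {x : ℕ → X}
    {N : ℕ → ℝ} (hN : Tendsto N atTop atTop) {E : ℝ} (hE : ∀ n, dist (x n) (β.1 (N n)) ≤ E) :
    TendstoBoundary x0 x β := by
  have hlower : ∀ᶠ n in atTop, N n - E ≤ dist x0 (x n) := by
    filter_upwards [hN.eventually_ge_atTop 0] with n hn
    linarith [β.2.dist_eq hn, dist_triangle x0 (x n) (β.1 (N n)), hE n]
  refine ⟨tendsto_atTop_mono' _ hlower (tendsto_atTop_add_const_right _ _ hN), ?_⟩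
  intro f hf t ht
  rw [tendsto_iff_dist_tendsto_zero]
  refine squeeze_zero' (Eventually.of_forall fun _ => dist_nonneg) ?_
    ((((tendsto_const_nhds (x := t)).div_atTop hN).const_mul 2).mul_const E |>.trans_eq (by simp))
  filter_upwards [hlower, hN.eventually_ge_atTop (t + E + 1)] with n hlow hn
  have hE0 : 0 ≤ E := dist_nonneg.trans (hE n)
  have hNpos : 0 < N n := by linarith
  have htL : t ≤ dist x0 (x n) := by linarith
  have hdβ := β.2.dist_eq hNpos.le
  rw [min_eq_left htL]
  calc dist (f n t) (β.1 t)
      ≤ 2 * (t / dist x0 (β.1 (N n))) * dist (x n) (β.1 (N n)) :=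
        hX.dist_geodesic_le_of_same_start (hf n) (β.2.isGeodesicFromTo hNpos.le) ht htL
          (by linarith) (by linarith)
    _ ≤ 2 * (t / N n) * E := by
        rw [hdβ]
        exact mul_le_mul_of_nonneg_left (hE n) (by positivity)

/-- Sequential compactness of `X ∪ ∂X`, for sequences going to infinity. -/
lemma exists_tendstoBoundary_subseq [ProperSpace X] (hX : IsCAT0Space X) {x : ℕ → X}
    (hx : Tendsto (fun n => dist x0 (x n)) atTop atTop) :
    ∃ φ : ℕ → ℕ, StrictMono φ ∧ ∃ β : Boundary X x0, TendstoBoundary x0 (x ∘ φ) β := by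
  choose f hf using fun n => hX.1 x0 (x n)
  set u : ℕ → ℝ → X := fun n t => f n (projIcc 0 (dist x0 (x n)) dist_nonneg t)
  have hu : ∀ n, ∀ t ≥ 0, u n t = f n (min t (dist x0 (x n))) := fun n t ht => by
    simp only [u, coe_projIcc, min_comm (dist x0 (x n)) t, max_eq_right (le_min ht dist_nonneg)]
  have hu0 : ∀ n, u n 0 = x0 := fun n => by rw [hu n 0 le_rfl, min_eq_left dist_nonneg, (hf n).1]
  obtain ⟨φ, hφ, ξ, hξ⟩ :=
    exists_subseq_tendsto_of_lipschitzWith (fun n => (hf n).lipschitzWith_comp_projIcc) hu0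
  have hxφ : Tendsto (fun k => dist x0 (x (φ k))) atTop atTop := hx.comp hφ.tendsto_atTop
  have hray : IsGeodesicRayFrom x0 ξ := by
    refine ⟨tendsto_nhds_unique (hξ 0) ?_, fun s t hs ht => ?_⟩
    · exact tendsto_const_nhds.congr fun k => (hu0 _).symm
    · have hdist : ∀ᶠ k in atTop, dist (u (φ k) s) (u (φ k) t) = |s - t| := by
        filter_upwards [hxφ.eventually_ge_atTop (max s t)] with k hk
        rw [hu _ s hs, hu _ t ht, min_eq_left (le_of_max_le_left hk),
          min_eq_left (le_of_max_le_right hk)]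
        exact (hf _).2.2 s ⟨hs, le_of_max_le_left hk⟩ t ⟨ht, le_of_max_le_right hk⟩
      exact tendsto_nhds_unique ((hξ s).dist (hξ t))
        (tendsto_const_nhds.congr' (hdist.mono fun _ => Eq.symm))
  refine ⟨φ, hφ, ⟨ξ, hray⟩, hxφ, fun f' hf' t ht => ?_⟩
  -- geodesics are unique, so any choice of segments agrees with the one used above
  have heq : ∀ k, f' k (min t (dist x0 (x (φ k)))) = u (φ k) t := fun k => by
    rw [hu _ t ht]
    exact hX.eq_of_isGeodesicFromTo (hf' k) (hf (φ k)) ⟨le_min ht dist_nonneg, min_le_right _ _⟩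
  simpa only [Function.comp_apply, heq] using hξ t

end Boundary

section FixedPoints

variable {G X : Type*} [Group G] [MetricSpace X] [MulAction G X]

lemma asymptoticMaps_of_tendstoBoundary (hiso : ∀ g : G, Isometry fun x : X => g • x)
    (hX : IsCAT0Space X) {g : G} {x0 : X} {β : Boundary X x0} {a : ℕ → G}
    (hcomm : ∀ n, g * a n = a n * g) (hβ : TendstoBoundary x0 (fun n => a n • x0) β) :
    AsymptoticMaps (fun t => g • β.1 t) β.1 := by
  refine ⟨dist x0 (g • x0), fun t ht => ?_⟩
  choose f hf using fun n => hX.1 x0 (a n • x0)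
  have hlim := hβ.2 f hf t ht
  refine le_of_tendsto (((hiso g).continuous.tendsto _).comp hlim |>.dist hlim)
    (Eventually.of_forall fun n => ?_)
  have hend : dist (a n • x0) (g • a n • x0) = dist x0 (g • x0) := by
    rw [← mul_smul, hcomm, mul_smul, (hiso (a n)).dist_eq]
  rw [dist_comm]
  refine (hX.dist_geodesic_le_max (hf n) ((hf n).comp_isometry (hiso g)) ((hiso g).dist_eq _ _)
    ⟨le_min ht dist_nonneg, min_le_right _ _⟩).trans_eq ?_
  rw [hend, max_self]

lemma commute_mul_inv_of_conj_eq {g b b' : G} (h : b⁻¹ * g * b = b'⁻¹ * g * b') :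
    g * (b * b'⁻¹) = b * b'⁻¹ * g :=
  calc g * (b * b'⁻¹) = b * (b⁻¹ * g * b) * b'⁻¹ := by group
    _ = b * (b'⁻¹ * g * b') * b'⁻¹ := by rw [h]
    _ = b * b'⁻¹ * g := by group

lemma IsGeometricAction.exists_tendstoBoundary_of_asymptoticMaps [ProperSpace X]
    (hGA : IsGeometricAction G X) (hX : IsCAT0Space X) {g : G} {x0 : X} {α : Boundary X x0}
    (hα : AsymptoticMaps (fun t => g • α.1 t) α.1) :
    ∃ a : ℕ → G, (∀ n, g * a n = a n * g) ∧ TendstoBoundary x0 (fun n => a n • x0) α := by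
  obtain ⟨C, hC⟩ := hα
  obtain ⟨D, hD⟩ := hGA.exists_dist_smul_le x0
  choose b hb using fun n : ℕ => hD (α.1 n)
  -- the conjugates of `g` by the `b n` move `x0` a bounded amount, so one of them recurs
  have hconj : ∀ n, (b n)⁻¹ * g * b n ∈ {h : G | dist x0 (h • x0) ≤ D + C + D} := fun n => by
    rw [mem_ofPred_eq, mul_smul, mul_smul, ← (hGA.isometry (b n)).dist_eq, smul_inv_smul]
    calc dist (b n • x0) (g • b n • x0)
        ≤ dist (b n • x0) (α.1 n) + dist (α.1 n) (g • α.1 n) + dist (g • α.1 n) (g • b n • x0) :=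
          dist_triangle4 _ _ _ _
      _ ≤ D + C + D := by
        rw [(hGA.isometry g).dist_eq, dist_comm (α.1 n), dist_comm (α.1 n)]
        gcongr
        exacts [hb n, hC n n.cast_nonneg, hb n]
  obtain ⟨c, -, hc⟩ := (hGA.finite_setOf_dist_smul_le x0 (D + C + D)).frequently_exists
    (l := atTop) (p := fun c n => (b n)⁻¹ * g * b n = c) |>.1
    (Frequently.of_forall fun n => ⟨_, hconj n, rfl⟩)
  obtain ⟨φ, hφ, hφc⟩ := extraction_of_frequently_atTop hc
  refine ⟨fun k => b (φ k) * (b (φ 0))⁻¹,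
    fun k => commute_mul_inv_of_conj_eq ((hφc k).trans (hφc 0).symm), ?_⟩
  refine tendstoBoundary_of_dist_le hX α (N := fun k => (φ k : ℝ))
    (tendsto_natCast_atTop_atTop.comp hφ.tendsto_atTop) (E := dist ((b (φ 0))⁻¹ • x0) x0 + D)
    fun k => ?_
  calc dist ((b (φ k) * (b (φ 0))⁻¹) • x0) (α.1 (φ k))
      ≤ dist (b (φ k) • (b (φ 0))⁻¹ • x0) (b (φ k) • x0) + dist (b (φ k) • x0) (α.1 (φ k)) := by
        rw [mul_smul]; exact dist_triangle _ _ _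
    _ ≤ dist ((b (φ 0))⁻¹ • x0) x0 + D := by
        rw [(hGA.isometry _).dist_eq]; exact add_le_add_right (hb _) _

lemma IsGeometricAction.exists_asymptoticMaps_of_infinite [ProperSpace X]
    (hGA : IsGeometricAction G X) (hX : IsCAT0Space X) {g : G} (x0 : X)
    (hinf : {h : G | g * h = h * g}.Infinite) :
    ∃ α : Boundary X x0, AsymptoticMaps (fun t => g • α.1 t) α.1 := by
  have hfar : ∀ n : ℕ, ∃ a : G, g * a = a * g ∧ (n : ℝ) < dist x0 (a • x0) := fun n => by
    by_contra! hnear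
    exact hinf ((hGA.finite_setOf_dist_smul_le x0 n).subset fun a ha => hnear a ha)
  choose a hcomm ha using hfar
  obtain ⟨φ, -, β, hβ⟩ := exists_tendstoBoundary_subseq hX
    (tendsto_atTop_mono (fun n => (ha n).le) tendsto_natCast_atTop_atTop)
  exact ⟨β, asymptoticMaps_of_tendstoBoundary hGA.isometry hX (fun k => hcomm (φ k)) hβ⟩

lemma infinite_of_tendstoBoundary {S : Set G} {a : ℕ → G} (ha : ∀ n, a n ∈ S) {x0 : X}
    {β : Boundary X x0} (hβ : TendstoBoundary x0 (fun n => a n • x0) β) : S.Infinite := by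
  intro hfin
  obtain ⟨B, hB⟩ := (hfin.image fun h => dist x0 (h • x0)).bddAbove
  obtain ⟨n, hn⟩ := (hβ.1.eventually_gt_atTop B).exists
  exact hn.not_ge (hB (mem_image_of_mem _ (ha n)))

end FixedPoints

/-- Here `α ∈ ∂X` is fixed by `g` iff `g ∘ ξ_α` is asymptotic to `ξ_α`, and `β ∈ L(A)` iff
some sequence in the orbit `A·x0` converges to `β` in the cone topology. -/
theorem boundary_fixed_set_eq_limit_set_of_centralizer
    {G X : Type*} [Group G] [MetricSpace X] [MulAction G X]
    (hGA : IsGeometricAction G X) (hCAT : IsCAT0Space X) (g : G) (x0 : X) :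
    ({α : Boundary X x0 | AsymptoticMaps (fun t => g • α.1 t) α.1} =
      {β : Boundary X x0 | ∃ a : ℕ → G, (∀ n, a n ∈ {h : G | g * h = h * g}) ∧
        TendstoBoundary x0 (fun n => (a n) • x0) β}) ∧
    ({α : Boundary X x0 | AsymptoticMaps (fun t => g • α.1 t) α.1} = ∅ ↔
      {h : G | g * h = h * g}.Finite) := by
  have := hGA.properSpace hCAT.1
  have hfixed : ∀ α : Boundary X x0, AsymptoticMaps (fun t => g • α.1 t) α.1 ↔
      ∃ a : ℕ → G, (∀ n, a n ∈ {h : G | g * h = h * g}) ∧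
        TendstoBoundary x0 (fun n => (a n) • x0) α := fun α =>
    ⟨hGA.exists_tendstoBoundary_of_asymptoticMaps hCAT,
      fun ⟨_, hcomm, hα⟩ => asymptoticMaps_of_tendstoBoundary hGA.isometry hCAT hcomm hα⟩
  refine ⟨ext hfixed, eq_empty_iff_forall_notMem.trans ⟨fun hempty => ?_, fun hfin α hα => ?_⟩⟩
  · by_contra hinf
    obtain ⟨α, hα⟩ := hGA.exists_asymptoticMaps_of_infinite hCAT x0 hinf
    exact hempty α hα
  · obtain ⟨a, ha, hα⟩ := (hfixed α).1 hα
    exact infinite_of_tendstoBoundary ha hα hfin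
end

section
/- Let a group G act by isometries on a metric space X, let g0, g ∈ G, let x0 ∈ X and N > 0, and suppose the fixed-point set F_{g0} = {x ∈ X : g0 x = x} is nonempty, contained in the ball B(x0, N), and satisfies g0 F_{g0} = F_{g0}. If d(x0, g x0) > 2N, then for every nonnegative integer i the sets (g g0)^i g F_{g0} and (g g0)^{i+1} g F_{g0} are disjoint. -/
open Metric Set Pointwise

/-- Let `G` act by isometries on a metric space `X`, let `g0, g ∈ G`, `x0 ∈ X`, `N > 0`,
and suppose `F_{g0}` is nonempty, contained in `B(x0, N)`, and `g0 F_{g0} = F_{g0}`.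
If `d(x0, g x0) > 2N`, then for every `i ∈ ℕ` the sets `(g g0)^i g F_{g0}` and
`(g g0)^{i+1} g F_{g0}` are disjoint. -/
theorem consecutive_translates_of_fixed_set_disjoint
    {G X : Type*} [Group G] [MetricSpace X] [MulAction G X]
    (hiso : ∀ g : G, Isometry (fun x : X => g • x))
    (g0 g : G) (x0 : X) (N : ℝ) (hN : 0 < N)
    (hFne : {x : X | g0 • x = x}.Nonempty)
    (hF : {x : X | g0 • x = x} ⊆ Metric.closedBall x0 N)
    (hinv : g0 • {x : X | g0 • x = x} = {x : X | g0 • x = x})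
    (hd : dist x0 (g • x0) > 2 * N) :
    ∀ i : ℕ, Disjoint (((g * g0) ^ i * g) • {x : X | g0 • x = x})
      (((g * g0) ^ (i + 1) * g) • {x : X | g0 • x = x}) := by
  intro i
  rw [Set.disjoint_left]
  rintro y ⟨a, ha, rfl⟩ ⟨b, hb, hy⟩
  -- hy : ((g*g0)^(i+1)*g) • b = ((g*g0)^i*g) • a
  simp only at hy
  have key : (g0 * g) • b = a := by
    have h2 : ((g * g0) ^ i * g)⁻¹ * ((g * g0) ^ (i + 1) * g) = g0 * g := by
      rw [pow_succ]; group
    calc (g0 * g) • b = (((g * g0) ^ i * g)⁻¹ * ((g * g0) ^ (i + 1) * g)) • b := by rw [h2]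
      _ = ((g * g0) ^ i * g)⁻¹ • (((g * g0) ^ (i + 1) * g) • b) := mul_smul _ _ _
      _ = ((g * g0) ^ i * g)⁻¹ • (((g * g0) ^ i * g) • a) := by rw [hy]
      _ = a := inv_smul_smul _ _
  have hgb : g • b = a := by
    have ha' : g0 • a = a := ha
    have : g0⁻¹ • a = a := by
      conv_lhs => rw [← ha']
      rw [inv_smul_smul]
    calc g • b = g0⁻¹ • (g0 * g) • b := by rw [mul_smul, inv_smul_smul]
      _ = g0⁻¹ • a := by rw [key]
      _ = a := this
  have d1 : dist x0 a ≤ N := by rw [dist_comm]; exact hF ha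
  have d2 : dist b x0 ≤ N := hF hb
  have d3 : dist a (g • x0) = dist b x0 := by
    rw [← hgb]
    exact (hiso g).dist_eq b x0
  have : dist x0 (g • x0) ≤ 2 * N := by
    calc dist x0 (g • x0) ≤ dist x0 a + dist a (g • x0) := dist_triangle _ _ _
      _ = dist x0 a + dist b x0 := by rw [d3]
      _ ≤ N + N := add_le_add d1 d2
      _ = 2 * N := by ring
  linarith
end

section
/- Suppose a group G acts geometrically on a CAT(0) space X and suppose g0 ∈ G has finite centralizer Z_{g0}, X \ F_{g0} is not connected, and each connected component of X \ F_{g0} is convex and not g0-invariant. Fix a basepoint x0 ∈ X and N > 0 with F_{g0} ⊆ B(x0, N). Then for every α ∈ ∂X and every g ∈ G there exists h ∈ G such that d(g x0, Im ξ_{hα}) ≤ N, where ξ_{hα} is the geodesic ray in X with ξ_{hα}(0) = x0 and ξ_{hα}(∞) = hα. -/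
open Metric Set Filter Pointwise

open Topology

section AuxGeo

variable {X : Type*} [MetricSpace X]

lemma IsGeodesicFromTo.rev {f : ℝ → X} {x y : X} (hf : IsGeodesicFromTo f x y) :
    IsGeodesicFromTo (fun u => f (dist x y - u)) y x := by
  obtain ⟨h0, hd, hpar⟩ := hf
  have hxy : dist y x = dist x y := dist_comm y x
  refine ⟨by simpa using hd, ?_, ?_⟩
  · simp only [hxy, sub_self, h0]
  · intro s hs t ht
    rw [hxy] at hs ht
    have h := hpar (dist x y - s) ⟨by linarith [hs.2], by linarith [hs.1]⟩
        (dist x y - t) ⟨by linarith [ht.2], by linarith [ht.1]⟩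
    simp only [] at h ⊢
    rw [h]
    rw [show dist x y - s - (dist x y - t) = t - s by ring, abs_sub_comm]

lemma IsGeodesicFromTo.trunc {f : ℝ → X} {x y : X} (hf : IsGeodesicFromTo f x y)
    {c : ℝ} (h0 : 0 ≤ c) (hc : c ≤ dist x y) :
    dist x (f c) = c ∧ IsGeodesicFromTo f x (f c) := by
  obtain ⟨hf0, hfd, hpar⟩ := hf
  have hd0 : (0:ℝ) ≤ dist x y := dist_nonneg
  have hxfc : dist x (f c) = c := by
    have h := hpar 0 ⟨le_refl 0, hd0⟩ c ⟨h0, hc⟩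
    rw [hf0] at h
    rw [h, abs_of_nonpos (by linarith)]
    ring
  refine ⟨hxfc, hf0, by rw [hxfc], ?_⟩
  intro s hs t ht
  rw [hxfc] at hs ht
  exact hpar s ⟨hs.1, hs.2.trans hc⟩ t ⟨ht.1, ht.2.trans hc⟩

lemma cat0_two_geodesics {x y y' : X} (hCAT : IsCAT0Space X)
    {f g : ℝ → X} (hf : IsGeodesicFromTo f x y) (hg : IsGeodesicFromTo g x y')
    {τ : ℝ} (hτ0 : 0 ≤ τ) (hτ1 : τ ≤ 1) :
    dist (f (τ * dist x y)) (g (τ * dist x y')) ≤ τ * dist y y' := by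
  have ha : (0:ℝ) ≤ dist x y := dist_nonneg
  have hb : (0:ℝ) ≤ dist x y' := dist_nonneg
  have hc : (0:ℝ) ≤ dist y y' := dist_nonneg
  have h1 := hCAT.2 x y y' f hf τ ⟨hτ0, hτ1⟩
  have h2 := hCAT.2 x y' (f (τ * dist x y)) g hg τ ⟨hτ0, hτ1⟩
  have hpx : dist (f (τ * dist x y)) x = τ * dist x y := by
    have h := hf.2.2 (τ * dist x y) ⟨mul_nonneg hτ0 ha, by nlinarith⟩ 0 ⟨le_refl 0, ha⟩
    rw [hf.1] at h
    rw [h, sub_zero, abs_of_nonneg (mul_nonneg hτ0 ha)]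
  rw [hpx] at h2
  rw [dist_comm y' x] at h1
  rw [dist_comm y' y] at h1
  rw [dist_comm (f (τ * dist x y)) y'] at h2
  have key : dist (f (τ * dist x y)) (g (τ * dist x y')) ^ 2 ≤ (τ * dist y y') ^ 2 := by
    nlinarith [mul_le_mul_of_nonneg_left h1 hτ0, h2]
  calc dist (f (τ * dist x y)) (g (τ * dist x y'))
      = Real.sqrt (dist (f (τ * dist x y)) (g (τ * dist x y')) ^ 2) :=
        (Real.sqrt_sq dist_nonneg).symm
    _ ≤ Real.sqrt ((τ * dist y y') ^ 2) := Real.sqrt_le_sqrt key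
    _ = τ * dist y y' := Real.sqrt_sq (mul_nonneg hτ0 hc)

end AuxGeo

section AuxComplete

lemma complete_of_geometric {G X : Type*} [Group G] [MetricSpace X] [MulAction G X]
    (hGA : IsGeometricAction G X) : CompleteSpace X := by
  classical
  apply Metric.complete_of_cauchySeq_tendsto
  intro u hu
  obtain ⟨K, hK, hKcov⟩ := hGA.cocompact
  have hdist : ∀ (g : G) (x y : X), dist (g • x) (g • y) = dist x y := fun g x y =>
    (hGA.isometry g).dist_eq x y
  have hrep : ∀ n, ∃ (g : G) (k : X), k ∈ K ∧ g • k = u n := by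
    intro n
    have h : u n ∈ ⋃ g : G, (fun x : X => g • x) '' K := by rw [hKcov]; trivial
    obtain ⟨g, ⟨k, hk, hgk⟩⟩ := Set.mem_iUnion.mp h
    exact ⟨g, k, hk, hgk⟩
  choose gg kk hkK hgk using hrep
  obtain ⟨κ, hκK, φ, hφ, hκ⟩ := hK.tendsto_subseq hkK
  set q : ℕ → X := fun j => gg (φ j) • κ with hq
  have hqu : Tendsto (fun j => dist (u (φ j)) (q j)) atTop (𝓝 0) := by
    have he : ∀ j, dist (u (φ j)) (q j) = dist (kk (φ j)) κ := by
      intro j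
      rw [← hgk (φ j)]
      exact hdist _ _ _
    simp only [he]
    exact tendsto_iff_dist_tendsto_zero.mp hκ
  have huφ : CauchySeq (u ∘ φ) := hu.comp_injective hφ.injective
  -- consecutive distances of q tend to zero
  have hqc : Tendsto (fun j => dist (q (j + 1)) (q j)) atTop (𝓝 0) := by
    have hbound : ∀ j, dist (q (j+1)) (q j) ≤
        dist (u (φ (j+1))) (q (j+1)) + dist (u (φ (j+1))) (u (φ j)) + dist (u (φ j)) (q j) := by
      intro j
      calc dist (q (j+1)) (q j) ≤ dist (q (j+1)) (u (φ (j+1))) + dist (u (φ (j+1))) (q j) :=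
            dist_triangle _ _ _
        _ ≤ dist (q (j+1)) (u (φ (j+1))) + (dist (u (φ (j+1))) (u (φ j)) + dist (u (φ j)) (q j)) :=
            by linarith [dist_triangle (u (φ (j+1))) (u (φ j)) (q j)]
        _ = _ := by rw [dist_comm (q (j+1)) (u (φ (j+1)))]; ring
    have hmid : Tendsto (fun j => dist (u (φ (j+1))) (u (φ j))) atTop (𝓝 0) := by
      rw [Metric.tendsto_atTop]
      intro ε hε
      obtain ⟨M, hM⟩ := Metric.cauchySeq_iff.mp huφ ε hε
      exact ⟨M, fun n hn => by
        simpa [Real.dist_eq, abs_of_nonneg dist_nonneg] using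
          hM (n+1) (le_trans hn (Nat.le_succ n)) n hn⟩
    have h1 : Tendsto (fun j => dist (u (φ (j+1))) (q (j+1))) atTop (𝓝 0) :=
      hqu.comp (tendsto_add_atTop_nat 1)
    have hsum : Tendsto (fun j => dist (u (φ (j+1))) (q (j+1)) + dist (u (φ (j+1))) (u (φ j))
        + dist (u (φ j)) (q j)) atTop (𝓝 0) := by
      have := (h1.add hmid).add hqu
      simpa using this
    exact squeeze_zero (fun j => dist_nonneg) hbound hsum
  set w : ℕ → G := fun j => (gg (φ j))⁻¹ * gg (φ (j + 1)) with hw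
  have hwκ : ∀ j, dist (w j • κ) κ = dist (q (j+1)) (q j) := by
    intro j
    have : gg (φ j) • (w j • κ) = q (j+1) := by
      rw [← mul_smul]
      simp [hw, hq]
    rw [← this, ← hdist (gg (φ j)) (w j • κ) κ]
  have hwκ0 : Tendsto (fun j => dist (w j • κ) κ) atTop (𝓝 0) := by
    simp only [hwκ]; exact hqc
  have hwκt : Tendsto (fun j => w j • κ) atTop (𝓝 κ) :=
    tendsto_iff_dist_tendsto_zero.mpr hwκ0
  -- compact probe
  have hC : IsCompact (K ∪ insert κ (Set.range fun j => w j • κ)) :=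
    hK.union hwκt.isCompact_insert_range
  have hwS : ∀ j, w j ∈ {g : G | ((fun x : X => g • x) '' (K ∪ insert κ (Set.range fun i => w i • κ))
      ∩ (K ∪ insert κ (Set.range fun i => w i • κ))).Nonempty} := by
    intro j
    refine ⟨w j • κ, ⟨κ, Or.inl hκK, rfl⟩, Or.inr (Set.mem_insert_of_mem _ ⟨j, rfl⟩)⟩
  have hSfin := hGA.proper _ hC
  -- eventual fixing
  have hev : ∀ᶠ j in atTop, w j • κ = κ := by
    set T : Set G := {g : G | g ∈ {g : G | ((fun x : X => g • x) ''
        (K ∪ insert κ (Set.range fun i => w i • κ))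
        ∩ (K ∪ insert κ (Set.range fun i => w i • κ))).Nonempty} ∧ g • κ ≠ κ} with hT
    have hTfin : T.Finite := hSfin.subset fun g hg => hg.1
    rcases T.eq_empty_or_nonempty with hTe | hTne
    · refine Filter.Eventually.of_forall fun j => ?_
      by_contra hne
      have : w j ∈ T := ⟨hwS j, hne⟩
      rw [hTe] at this
      exact this
    · obtain ⟨g₀, hg₀T, hg₀min⟩ := hTfin.toFinset.exists_min_image (fun g => dist (g • κ) κ)
        (by simpa using hTne)
      rw [Set.Finite.mem_toFinset] at hg₀T
      have hδ : 0 < dist (g₀ • κ) κ := dist_pos.mpr hg₀T.2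
      obtain ⟨J, hJ⟩ := Metric.tendsto_atTop.mp hwκ0 (dist (g₀ • κ) κ) hδ
      filter_upwards [eventually_ge_atTop J] with j hjJ
      have hj := hJ j hjJ
      by_contra hne
      have hwT : w j ∈ T := ⟨hwS j, hne⟩
      have := hg₀min (w j) (Set.Finite.mem_toFinset _ |>.mpr hwT)
      rw [Real.dist_eq, sub_zero, abs_of_nonneg dist_nonneg] at hj
      linarith
  obtain ⟨M, hM⟩ := eventually_atTop.mp hev
  have hqconst : ∀ j, M ≤ j → q j = q M := by
    intro j hj
    induction j, hj using Nat.le_induction with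
    | base => rfl
    | succ n hn ih =>
      have h1 : q (n+1) = gg (φ n) • (w n • κ) := by
        rw [← mul_smul]; simp [hw, hq]
      rw [h1, hM n hn]
      exact ih
  have hqt : Tendsto q atTop (𝓝 (q M)) := by
    refine Tendsto.congr' ?_ tendsto_const_nhds
    filter_upwards [eventually_ge_atTop M] with j hj
    exact (hqconst j hj).symm
  have huφt : Tendsto (u ∘ φ) atTop (𝓝 (q M)) := by
    rw [tendsto_iff_dist_tendsto_zero]
    have hb : ∀ j, dist ((u ∘ φ) j) (q M) ≤ dist (u (φ j)) (q j) + dist (q j) (q M) := fun j =>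
      dist_triangle _ _ _
    have hsum : Tendsto (fun j => dist (u (φ j)) (q j) + dist (q j) (q M)) atTop (𝓝 0) := by
      have h2 : Tendsto (fun j => dist (q j) (q M)) atTop (𝓝 0) :=
        tendsto_iff_dist_tendsto_zero.mp hqt
      simpa using hqu.add h2
    exact squeeze_zero (fun j => dist_nonneg) hb hsum
  exact ⟨q M, tendsto_nhds_of_cauchySeq_of_subseq hu hφ.tendsto_atTop huφt⟩

end AuxComplete

section AuxRay

variable {X : Type*} [MetricSpace X]

set_option maxHeartbeats 2000000 in
lemma exists_asymptotic_ray (hCAT : IsCAT0Space X) [CompleteSpace X]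
    (x0 y : X) (ξ : ℝ → X) (hξ : IsGeodesicRayFrom y ξ) :
    ∃ β : ℝ → X, IsGeodesicRayFrom x0 β ∧ ∀ t, 0 ≤ t → dist (β t) (ξ t) ≤ dist x0 y := by
  classical
  set R := dist x0 y with hR
  have hR0 : 0 ≤ R := dist_nonneg
  have hgeo : ∀ s : ℝ, ∃ f : ℝ → X, IsGeodesicFromTo f x0 (ξ s) := fun s => hCAT.1 x0 (ξ s)
  choose f hf using hgeo
  have hdy : ∀ s : ℝ, 0 ≤ s → dist y (ξ s) = s := by
    intro s hs
    rw [← hξ.1, hξ.2 0 s le_rfl hs, abs_of_nonpos (by linarith)]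
    ring
  have hlb : ∀ s : ℝ, 0 ≤ s → s - R ≤ dist x0 (ξ s) := by
    intro s hs
    have h1 : dist y (ξ s) ≤ dist y x0 + dist x0 (ξ s) := dist_triangle _ _ _
    rw [hdy s hs, dist_comm y x0, ← hR] at h1
    linarith
  have hub : ∀ s : ℝ, 0 ≤ s → dist x0 (ξ s) ≤ s + R := by
    intro s hs
    have h1 : dist x0 (ξ s) ≤ dist x0 y + dist y (ξ s) := dist_triangle _ _ _
    rw [hdy s hs, ← hR] at h1
    linarith
  have hEmono : ∀ s s' : ℝ, 0 ≤ s → s ≤ s' →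
      s - dist x0 (ξ s) ≤ s' - dist x0 (ξ s') := by
    intro s s' hs hss'
    have h1 : dist x0 (ξ s') ≤ dist x0 (ξ s) + dist (ξ s) (ξ s') := dist_triangle _ _ _
    rw [hξ.2 s s' hs (hs.trans hss'), abs_of_nonpos (by linarith)] at h1
    linarith
  -- key comparison estimate, step A
  have keyA : ∀ s s' : ℝ, 0 ≤ s → s ≤ s' →
      dist x0 (ξ s) ≤ dist x0 (ξ s') → 0 < dist x0 (ξ s') →
      dist (ξ s) (f s' (dist x0 (ξ s))) ^ 2 * dist x0 (ξ s') ≤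
        dist x0 (ξ s) *
          (2 * (s' - s) * ((s' - dist x0 (ξ s')) - (s - dist x0 (ξ s)))) := by
    intro s s' hs hss' hdd hd'pos
    set a := dist x0 (ξ s) with hadef
    set b := dist x0 (ξ s') with hbdef
    have ha : 0 ≤ a := dist_nonneg
    have hτ0 : 0 ≤ a / b := div_nonneg ha hd'pos.le
    have hτ1 : a / b ≤ 1 := (div_le_one hd'pos).mpr hdd
    have h := hCAT.2 x0 (ξ s') (ξ s) (f s') (hf s') (a / b) ⟨hτ0, hτ1⟩
    rw [← hbdef, div_mul_cancel₀ _ (ne_of_gt hd'pos)] at h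
    rw [dist_comm (ξ s) x0, ← hadef] at h
    have hss : dist (ξ s) (ξ s') = s' - s := by
      rw [hξ.2 s s' hs (hs.trans hss'), abs_of_nonpos (by linarith)]
      ring
    rw [hss] at h
    have hb' : dist (ξ s) (f s' a) ^ 2 * b ≤
        ((1 - a/b) * a^2 + (a/b)*(s'-s)^2 - (a/b)*(1-a/b)*b^2) * b :=
      mul_le_mul_of_nonneg_right h hd'pos.le
    have hring : ((1 - a/b) * a^2 + (a/b)*(s'-s)^2 - (a/b)*(1-a/b)*b^2) * b
        = a * ((s'-s)^2 - (b-a)^2) := by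
      field_simp
      ring
    rw [hring] at hb'
    refine hb'.trans (mul_le_mul_of_nonneg_left ?_ ha)
    nlinarith [sq_nonneg ((s' - s) - (b - a))]
  -- key comparison estimate, step B
  have keyB : ∀ s s' t : ℝ, R + 1 ≤ s → s + 2*R ≤ s' → 0 ≤ t → t ≤ dist x0 (ξ s) →
      dist (f s t) (f s' t) ^ 2 ≤
        2 * t^2 * ((s' - dist x0 (ξ s')) - (s - dist x0 (ξ s))) := by
    intro s s' t hs hss' ht htd
    have hs0 : 0 ≤ s := by linarith
    have hs'0 : 0 ≤ s' := by linarith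
    have h1a : 1 ≤ dist x0 (ξ s) := by have := hlb s hs0; linarith
    have hapos : (0:ℝ) < dist x0 (ξ s) := by linarith
    have hab : dist x0 (ξ s) ≤ dist x0 (ξ s') := by
      have h1 := hub s hs0
      have h2 := hlb s' hs'0
      linarith
    have hbpos : (0:ℝ) < dist x0 (ξ s') := lt_of_lt_of_le hapos hab
    obtain ⟨htr1, htr2⟩ := (hf s').trunc hapos.le hab
    have hconv := cat0_two_geodesics hCAT (hf s) htr2
      (div_nonneg ht hapos.le) ((div_le_one hapos).mpr htd)
    rw [htr1, div_mul_cancel₀ _ (ne_of_gt hapos)] at hconv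
    -- hconv : dist (f s t) (f s' t) ≤ (t / dist x0 (ξ s)) * dist (ξ s) (f s' (dist x0 (ξ s)))
    have hA := keyA s s' hs0 (by linarith) hab hbpos
    set a := dist x0 (ξ s) with hadef
    set b := dist x0 (ξ s') with hbdef
    set D := dist (ξ s) (f s' a) with hDdef
    set Δ := (s' - b) - (s - a) with hΔdef
    have hΔ0 : 0 ≤ Δ := by
      have := hEmono s s' hs0 (by linarith)
      simp only [hΔdef]
      linarith
    have hDpos : 0 ≤ D := dist_nonneg
    have hx0 : 0 ≤ dist (f s t) (f s' t) := dist_nonneg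
    have h2' : dist (f s t) (f s' t) * a ≤ t * D := by
      have h := mul_le_mul_of_nonneg_right hconv hapos.le
      calc dist (f s t) (f s' t) * a ≤ (t/a * D) * a := h
        _ = t * D := by field_simp
    have hbs' : s' - s ≤ b := by
      have := hlb s' hs'0
      simp only [← hbdef] at this ⊢
      linarith
    set x := dist (f s t) (f s' t) with hxdef
    have e1 : x^2 * a^2 ≤ t^2 * D^2 := by
      have h := mul_self_le_mul_self (mul_nonneg hx0 hapos.le) h2'
      calc x^2 * a^2 = x * a * (x * a) := by ring
        _ ≤ t * D * (t * D) := h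
        _ = t^2 * D^2 := by ring
    have e2 : t^2 * (D^2 * b) ≤ t^2 * (a * (2*(s'-s)*Δ)) :=
      mul_le_mul_of_nonneg_left hA (sq_nonneg t)
    have e3 : x^2 * a^2 * b ≤ t^2 * (a * (2*(s'-s)*Δ)) := by
      have h := mul_le_mul_of_nonneg_right e1 hbpos.le
      calc x^2 * a^2 * b ≤ t^2 * D^2 * b := h
        _ = t^2 * (D^2 * b) := by ring
        _ ≤ t^2 * (a * (2*(s'-s)*Δ)) := e2
    have e4 : t^2 * (a * (2*(s'-s)*Δ)) ≤ t^2 * (a * (2*b*Δ)) := by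
      refine mul_le_mul_of_nonneg_left ?_ (sq_nonneg t)
      refine mul_le_mul_of_nonneg_left ?_ hapos.le
      have h := mul_nonneg (sub_nonneg.mpr hbs') hΔ0
      nlinarith [h]
    have hab' : (0:ℝ) < a * b := mul_pos hapos hbpos
    have e5 : x^2 * a * (a*b) ≤ 2*t^2*Δ * (a*b) := by
      calc x^2 * a * (a*b) = x^2 * a^2 * b := by ring
        _ ≤ t^2 * (a * (2*(s'-s)*Δ)) := e3
        _ ≤ t^2 * (a * (2*b*Δ)) := e4
        _ = 2*t^2*Δ * (a*b) := by ring
    have e6 : x^2 * a ≤ 2*t^2*Δ := le_of_mul_le_mul_right e5 hab'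
    have e7 : x^2 * 1 ≤ x^2 * a := mul_le_mul_of_nonneg_left h1a (sq_nonneg x)
    calc x^2 = x^2 * 1 := by ring
      _ ≤ x^2 * a := e7
      _ ≤ 2*t^2*Δ := e6
      _ = 2 * t^2 * ((s' - dist x0 (ξ s')) - (s - dist x0 (ξ s))) := by rw [hΔdef]
  -- helper: casts
  have hceil : ∀ (r : ℝ) (n : ℕ), ⌈r⌉₊ ≤ n → r ≤ (n:ℝ) := by
    intro r n hn
    exact le_trans (Nat.le_ceil r) (by exact_mod_cast hn)
  -- E on naturals: monotone and bounded, hence convergent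
  have hEbdd : BddAbove (Set.range fun n : ℕ => (n:ℝ) - dist x0 (ξ n)) := by
    refine ⟨R, ?_⟩
    rintro x ⟨n, rfl⟩
    show (n:ℝ) - dist x0 (ξ n) ≤ R
    have := hlb n n.cast_nonneg
    linarith
  have hEmonoN : Monotone (fun n : ℕ => (n:ℝ) - dist x0 (ξ n)) := by
    intro m n hmn
    exact hEmono m n m.cast_nonneg (by exact_mod_cast hmn)
  set L := ⨆ n : ℕ, ((n:ℝ) - dist x0 (ξ n)) with hL
  have hEtend : Tendsto (fun n : ℕ => (n:ℝ) - dist x0 (ξ n)) atTop (𝓝 L) :=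
    tendsto_atTop_ciSup hEmonoN hEbdd
  have hEleL : ∀ n : ℕ, (n:ℝ) - dist x0 (ξ n) ≤ L := fun n => le_ciSup hEbdd n
  -- Cauchy sequences
  have hcau : ∀ t : ℝ, 0 ≤ t → CauchySeq (fun n : ℕ => f n (min t (dist x0 (ξ n)))) := by
    intro t ht
    rw [Metric.cauchySeq_iff]
    intro δ hδ
    have hδ' : 0 < δ^2 / (16*(t^2+1)) := by positivity
    obtain ⟨M0, hM0⟩ := Metric.tendsto_atTop.mp hEtend (δ^2 / (16*(t^2+1))) hδ'
    set N := M0 + ⌈R + 1⌉₊ + ⌈t + R⌉₊ with hN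
    have est : ∀ j : ℕ, N ≤ j → ∀ k : ℕ, j + ⌈2*R⌉₊ ≤ k →
        dist (f j (min t (dist x0 (ξ j)))) (f k (min t (dist x0 (ξ k)))) < δ/2 := by
      intro j hj k hk
      have hjR1 : R + 1 ≤ (j:ℝ) := hceil _ j (by omega)
      have hjtR : t + R ≤ (j:ℝ) := hceil _ j (by omega)
      have hjM0 : M0 ≤ j := by omega
      have hjk : (j:ℝ) + 2*R ≤ (k:ℝ) := by
        have h1 : (2*R) ≤ (⌈2*R⌉₊ : ℝ) := Nat.le_ceil _
        have h2 : ((j + ⌈2*R⌉₊ : ℕ) : ℝ) ≤ (k:ℝ) := by exact_mod_cast hk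
        push_cast at h2
        linarith
      have hjk' : (j:ℝ) ≤ (k:ℝ) := by linarith
      have htdj : t ≤ dist x0 (ξ j) := by
        have := hlb j j.cast_nonneg
        linarith
      have htdk : t ≤ dist x0 (ξ k) := by
        have := hlb k k.cast_nonneg
        linarith
      rw [min_eq_left htdj, min_eq_left htdk]
      have hKB := keyB j k t hjR1 hjk ht htdj
      have hEk : (k:ℝ) - dist x0 (ξ k) ≤ L := hEleL k
      have hEj : L - ((j:ℝ) - dist x0 (ξ j)) < δ^2 / (16*(t^2+1)) := by
        have h := hM0 j hjM0
        rw [Real.dist_eq] at h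
        have h2 := abs_lt.mp h
        linarith [h2.1, h2.2]
      have hΔδ : ((k:ℝ) - dist x0 (ξ k)) - ((j:ℝ) - dist x0 (ξ j)) ≤ δ^2 / (16*(t^2+1)) := by
        linarith
      have hsq : dist (f j t) (f k t) ^ 2 < (δ/2)^2 := by
        have hb1 : dist (f j t) (f k t) ^ 2 ≤ 2 * t^2 * (δ^2 / (16*(t^2+1))) := by
          refine hKB.trans ?_
          apply mul_le_mul_of_nonneg_left hΔδ (by positivity)
        have hq1 : t^2 / (8*(t^2+1)) < 1/4 := by
          rw [div_lt_div_iff₀ (by positivity) (by norm_num)]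
          nlinarith [sq_nonneg t]
        have hb2 : 2 * t^2 * (δ^2 / (16*(t^2+1))) < (δ/2)^2 := by
          have hδsq : (0:ℝ) < δ^2 := by positivity
          have hne : (t^2+1) ≠ 0 := by positivity
          calc 2 * t^2 * (δ^2 / (16*(t^2+1))) = δ^2 * (t^2 / (8*(t^2+1))) := by
                field_simp
                ring
            _ < δ^2 * (1/4) := mul_lt_mul_of_pos_left hq1 hδsq
            _ = (δ/2)^2 := by ring
        linarith
      have := lt_of_pow_lt_pow_left₀ 2 (by positivity : (0:ℝ) ≤ δ/2) hsq
      exact this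
    refine ⟨N, fun m hm n hn => ?_⟩
    set k := max m n + ⌈2*R⌉₊ with hk
    have h1 := est m hm k (by omega)
    have h2 := est n hn k (by omega)
    calc dist (f m (min t (dist x0 (ξ m)))) (f n (min t (dist x0 (ξ n))))
        ≤ dist (f m (min t (dist x0 (ξ m)))) (f k (min t (dist x0 (ξ k)))) +
          dist (f k (min t (dist x0 (ξ k)))) (f n (min t (dist x0 (ξ n)))) := dist_triangle _ _ _
      _ < δ/2 + δ/2 := by
          rw [dist_comm (f k (min t (dist x0 (ξ k))))]
          exact add_lt_add h1 h2
      _ = δ := by ring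
  have hlim : ∀ t : ℝ, 0 ≤ t →
      ∃ z : X, Tendsto (fun n : ℕ => f n (min t (dist x0 (ξ n)))) atTop (𝓝 z) :=
    fun t ht => cauchySeq_tendsto_of_complete (hcau t ht)
  choose bfun hbfun using hlim
  set β : ℝ → X := fun t => if ht : 0 ≤ t then bfun t ht else x0 with hβ
  have hβt : ∀ (t : ℝ) (ht : 0 ≤ t),
      Tendsto (fun n : ℕ => f n (min t (dist x0 (ξ n)))) atTop (𝓝 (β t)) := by
    intro t ht
    have : β t = bfun t ht := dif_pos ht
    rw [this]
    exact hbfun t ht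
  have hmin : ∀ (t : ℝ), 0 ≤ t → ∀ n : ℕ, ⌈t + R⌉₊ ≤ n → min t (dist x0 (ξ n)) = t := by
    intro t ht n hn
    refine min_eq_left ?_
    have h1 : t + R ≤ (n:ℝ) := hceil _ n hn
    have := hlb n n.cast_nonneg
    linarith
  -- β 0 = x0
  have hβ0 : β 0 = x0 := by
    have h0 := hβt 0 le_rfl
    have heq : (fun n : ℕ => f n (min 0 (dist x0 (ξ n)))) = fun _ => x0 := by
      funext n
      rw [min_eq_left dist_nonneg, (hf n).1]
    rw [heq] at h0
    exact tendsto_nhds_unique h0 tendsto_const_nhds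
  -- geodesic property
  have hβd : ∀ s t : ℝ, 0 ≤ s → 0 ≤ t → dist (β s) (β t) = |s - t| := by
    intro s t hs ht
    have hds := (hβt s hs).dist (hβt t ht)
    have hev : (fun n : ℕ => dist (f n (min s (dist x0 (ξ n)))) (f n (min t (dist x0 (ξ n)))))
        =ᶠ[atTop] fun _ => |s - t| := by
      filter_upwards [eventually_ge_atTop (⌈s + R⌉₊ + ⌈t + R⌉₊)] with n hn
      rw [hmin s hs n (by omega), hmin t ht n (by omega)]
      have hn1 : s + R ≤ (n:ℝ) := hceil _ n (by omega)
      have hn2 : t + R ≤ (n:ℝ) := hceil _ n (by omega)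
      have hd := hlb n n.cast_nonneg
      exact (hf n).2.2 s ⟨hs, by linarith⟩ t ⟨ht, by linarith⟩
    have := hds.congr' hev
    exact tendsto_nhds_unique this tendsto_const_nhds
  refine ⟨β, ⟨hβ0, hβd⟩, ?_⟩
  -- asymptotic bound
  intro t ht
  have hdt := (hβt t ht).dist (tendsto_const_nhds : Tendsto (fun _ : ℕ => ξ t) atTop (𝓝 (ξ t)))
  refine le_of_tendsto hdt ?_
  filter_upwards [eventually_ge_atTop (⌈t + R⌉₊ + ⌈R + 1⌉₊)] with n hn
  rw [hmin t ht n (by omega)]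
  -- pointwise bound dist (f n t) (ξ t) ≤ R
  have hn1 : t + R ≤ (n:ℝ) := hceil _ n (by omega)
  have hn2 : R + 1 ≤ (n:ℝ) := hceil _ n (by omega)
  have hn0 : (0:ℝ) ≤ (n:ℝ) := n.cast_nonneg
  have hdl := hlb n hn0
  have hdu := hub n hn0
  have hapos : (0:ℝ) < dist x0 (ξ n) := by linarith
  have htd : t ≤ dist x0 (ξ n) := by linarith
  set a := dist x0 (ξ n) with hadef
  set τ := (a - t) / a with hτdef
  have hτ0 : 0 ≤ τ := div_nonneg (by linarith) hapos.le
  have hτ1 : τ ≤ 1 := by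
    rw [hτdef, div_le_one hapos]
    linarith
  have hrev := (hf n).rev
  have hζ : IsGeodesicFromTo (fun u => ξ ((n:ℝ) - u)) (ξ (n:ℝ)) y := by
    have hdny : dist (ξ (n:ℝ)) y = (n:ℝ) := by rw [dist_comm]; exact hdy n hn0
    refine ⟨by simp, ?_, ?_⟩
    · rw [hdny]
      show ξ ((n:ℝ) - (n:ℝ)) = y
      rw [sub_self]
      exact hξ.1
    · intro u hu v hv
      rw [hdny] at hu hv
      rw [hξ.2 ((n:ℝ) - u) ((n:ℝ) - v) (by linarith [hu.2]) (by linarith [hv.2])]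
      rw [show (n:ℝ) - u - ((n:ℝ) - v) = v - u by ring, abs_sub_comm]
  have hconv := cat0_two_geodesics hCAT hrev hζ hτ0 hτ1
  -- simplify the two points
  have hd1 : dist (ξ (n:ℝ)) x0 = a := by rw [dist_comm]
  have hd2 : dist (ξ (n:ℝ)) y = (n:ℝ) := by rw [dist_comm]; exact hdy n hn0
  rw [hd1, hd2] at hconv
  have hτa : τ * a = a - t := by
    rw [hτdef]
    field_simp
  rw [hτa] at hconv
  have hpt1 : dist x0 (ξ (n:ℝ)) - (a - t) = t := by rw [← hadef]; ring
  rw [hpt1] at hconv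
  -- hconv : dist (f n t) (ξ (n - τ*n)) ≤ τ * dist x0 y
  have hnτn : (0:ℝ) ≤ (n:ℝ) - τ * (n:ℝ) := by nlinarith [hτ1, hn0]
  have hstep : dist (ξ ((n:ℝ) - τ * (n:ℝ))) (ξ t) = |(n:ℝ) - τ * (n:ℝ) - t| :=
    hξ.2 _ t hnτn ht
  have habs : |(n:ℝ) - τ * (n:ℝ) - t| ≤ (t/a) * R := by
    have hexp : (n:ℝ) - τ * (n:ℝ) - t = (t/a) * ((n:ℝ) - a) := by
      rw [hτdef]
      field_simp
      ring
    rw [hexp, abs_mul, abs_of_nonneg (div_nonneg ht hapos.le)]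
    have hna : |(n:ℝ) - a| ≤ R := abs_le.mpr ⟨by linarith, by linarith⟩
    exact mul_le_mul_of_nonneg_left hna (div_nonneg ht hapos.le)
  calc dist (f (n:ℝ) t) (ξ t)
      ≤ dist (f (n:ℝ) t) (ξ ((n:ℝ) - τ * (n:ℝ))) + dist (ξ ((n:ℝ) - τ * (n:ℝ))) (ξ t) :=
        dist_triangle _ _ _
    _ ≤ τ * dist x0 y + (t/a) * R := add_le_add hconv (by rw [hstep]; exact habs)
    _ = R := by
        rw [← hR, hτdef]
        field_simp
        ring
end AuxRay

section AuxTop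

variable {X : Type*} [MetricSpace X]

lemma ray_continuousOn {x0 : X} {ξ : ℝ → X}
    (hξ : IsGeodesicRayFrom x0 ξ) : ContinuousOn ξ (Set.Ici (0:ℝ)) := by
  refine LipschitzOnWith.continuousOn (K := 1) ?_
  rw [lipschitzOnWith_iff_dist_le_mul]
  intro s hs t ht
  rw [hξ.2 s t hs ht, Real.dist_eq]
  simp

lemma geodesic_continuousOn {f : ℝ → X} {x y : X}
    (hf : IsGeodesicFromTo f x y) : ContinuousOn f (Set.Icc 0 (dist x y)) := by
  refine LipschitzOnWith.continuousOn (K := 1) ?_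
  rw [lipschitzOnWith_iff_dist_le_mul]
  intro s hs t ht
  rw [hf.2.2 s hs t ht, Real.dist_eq]
  simp

lemma ray_dist_base {x0 : X} {ξ : ℝ → X} (hξ : IsGeodesicRayFrom x0 ξ)
    (t : ℝ) (ht : 0 ≤ t) : dist x0 (ξ t) = t := by
  rw [← hξ.1, hξ.2 0 t le_rfl ht, abs_of_nonpos (by linarith)]
  ring

end AuxTop


set_option maxHeartbeats 1000000 in
/-- Key step in the proof of the main theorem: under the hypotheses of the main theorem,
with basepoint `x0` and `N > 0` such that `F_{g0} ⊆ B(x0, N)`, for every `α ∈ ∂X` and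
every `g ∈ G` there exists `h ∈ G` with `d(g x0, Im ξ_{hα}) ≤ N`, where `ξ_{hα}` is the
geodesic ray from `x0` representing `h·α` (i.e. asymptotic to `h ∘ ξ_α`). -/
theorem exists_translate_ray_near_orbit_point
    {G X : Type*} [Group G] [MetricSpace X] [MulAction G X]
    (hGA : IsGeometricAction G X) (hCAT : IsCAT0Space X) (g0 : G)
    (hZ : {h : G | g0 * h = h * g0}.Finite)
    (hdisc : ¬ IsPreconnected {x : X | g0 • x = x}ᶜ)
    (hcomp : ∀ x ∈ {x : X | g0 • x = x}ᶜ,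
      GeodesicConvex (connectedComponentIn {x : X | g0 • x = x}ᶜ x) ∧
        g0 • connectedComponentIn {x : X | g0 • x = x}ᶜ x ≠
          connectedComponentIn {x : X | g0 • x = x}ᶜ x)
    (x0 : X) (N : ℝ) (hN : 0 < N)
    (hF : {x : X | g0 • x = x} ⊆ Metric.closedBall x0 N) :
    ∀ (α : Boundary X x0) (g : G), ∃ (h : G) (β : Boundary X x0),
      AsymptoticMaps (fun t => h • α.1 t) β.1 ∧
      infDist (g • x0) (rayImage β) ≤ N := by
  classical
  intro α g
  haveI : CompleteSpace X := complete_of_geometric hGA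
  have hdistg : ∀ (g' : G) (x y : X), dist (g' • x) (g' • y) = dist x y := fun g' x y =>
    (hGA.isometry g').dist_eq x y
  by_cases hcase : dist (g • x0) x0 ≤ N
  · refine ⟨1, α, ⟨0, fun t ht => ?_⟩, ?_⟩
    · simp
    · have hx0mem : x0 ∈ rayImage α := ⟨0, Set.self_mem_Ici, α.2.1⟩
      exact le_trans (Metric.infDist_le_dist_of_mem hx0mem) hcase
  · push_neg at hcase
    have hray1 : IsGeodesicRayFrom (g • x0) (fun t => g • α.1 t) := by
      constructor
      · show g • α.1 0 = g • x0
        rw [α.2.1]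
      · intro s t hs ht
        show dist (g • α.1 s) (g • α.1 t) = |s - t|
        rw [hdistg, α.2.2 s t hs ht]
    have hray2 : IsGeodesicRayFrom ((g * g0) • x0) (fun t => (g * g0) • α.1 t) := by
      constructor
      · show (g * g0) • α.1 0 = (g * g0) • x0
        rw [α.2.1]
      · intro s t hs ht
        show dist ((g * g0) • α.1 s) ((g * g0) • α.1 t) = |s - t|
        rw [hdistg, α.2.2 s t hs ht]
    obtain ⟨β1, hβ1ray, hβ1as⟩ := exists_asymptotic_ray hCAT x0 (g • x0) _ hray1
    obtain ⟨β2, hβ2ray, hβ2as⟩ := exists_asymptotic_ray hCAT x0 ((g * g0) • x0) _ hray2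
    by_cases h1 : infDist (g • x0) (rayImage (⟨β1, hβ1ray⟩ : Boundary X x0)) ≤ N
    · exact ⟨g, ⟨β1, hβ1ray⟩,
        ⟨dist x0 (g • x0), fun t ht => by rw [dist_comm]; exact hβ1as t ht⟩, h1⟩
    by_cases h2 : infDist (g • x0) (rayImage (⟨β2, hβ2ray⟩ : Boundary X x0)) ≤ N
    · exact ⟨g * g0, ⟨β2, hβ2ray⟩,
        ⟨dist x0 ((g * g0) • x0), fun t ht => by rw [dist_comm]; exact hβ2as t ht⟩, h2⟩
    exfalso
    push_neg at h1 h2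
    -- notation
    have hR0 : 0 ≤ dist x0 (g • x0) := dist_nonneg
    have hR20 : 0 ≤ dist x0 ((g * g0) • x0) := dist_nonneg
    have hαF : ∀ t : ℝ, N < t → α.1 t ∈ {x : X | g0 • x = x}ᶜ := by
      intro t htN hmem
      have h := hF hmem
      rw [Metric.mem_closedBall, dist_comm, ray_dist_base α.2 t (by linarith)] at h
      linarith
    have haF : α.1 (N + 1) ∈ {x : X | g0 • x = x}ᶜ := hαF (N + 1) (by linarith)
    obtain ⟨-, hne⟩ := hcomp (α.1 (N + 1)) haF
    set C := connectedComponentIn {x : X | g0 • x = x}ᶜ (α.1 (N + 1)) with hCdef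
    have hαC : ∀ t : ℝ, N < t → α.1 t ∈ C := by
      intro t htN
      have hconn : IsPreconnected (α.1 '' Set.Ioi N) := by
        apply isPreconnected_Ioi.image
        exact (ray_continuousOn α.2).mono (fun x hx => le_of_lt (hN.trans hx))
      have hsub : α.1 '' Set.Ioi N ⊆ {x : X | g0 • x = x}ᶜ := by
        rintro _ ⟨u, hu, rfl⟩
        exact hαF u hu
      have hmem : α.1 (N + 1) ∈ α.1 '' Set.Ioi N := ⟨N + 1, lt_add_one N, rfl⟩
      exact hconn.subset_connectedComponentIn hmem hsub ⟨t, htN, rfl⟩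
    -- translated fixed set
    have hFgball : (fun x : X => g • x) '' {x : X | g0 • x = x} ⊆
        Metric.closedBall (g • x0) N := by
      rintro _ ⟨x, hx, rfl⟩
      rw [Metric.mem_closedBall, hdistg]
      have h := hF hx
      rwa [Metric.mem_closedBall] at h
    have hx0Fgc : x0 ∈ ((fun x : X => g • x) '' {x : X | g0 • x = x})ᶜ := by
      intro hmem
      have h := hFgball hmem
      rw [Metric.mem_closedBall, dist_comm] at h
      linarith
    -- homeomorphisms from the action
    let e : G → X ≃ₜ X := fun g' =>
      { toEquiv := MulAction.toPerm g'
        continuous_toFun := (hGA.isometry g').continuous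
        continuous_invFun := (hGA.isometry g'⁻¹).continuous }
    -- main component argument
    have main : ∀ (h' : G) (βf : ℝ → X), IsGeodesicRayFrom x0 βf →
        (∀ t, 0 ≤ t → dist (βf t) (h' • α.1 t) ≤ dist x0 (h' • x0)) →
        ((fun x : X => h' • x) '' {x : X | g0 • x = x} =
          (fun x : X => g • x) '' {x : X | g0 • x = x}) →
        (∀ t, 0 ≤ t → N < dist (g • x0) (βf t)) →
        connectedComponentIn ((fun x : X => g • x) '' {x : X | g0 • x = x})ᶜ x0 =
          (fun x : X => h' • x) '' C := by
      intro h' βf hβray hβas hFh hfar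
      have hβ0 : βf 0 = x0 := hβray.1
      -- the ray avoids the translated fixed set
      have hImsub : βf '' Set.Ici 0 ⊆ ((fun x : X => g • x) '' {x : X | g0 • x = x})ᶜ := by
        rintro _ ⟨u, hu, rfl⟩ hmem
        have h := hFgball hmem
        rw [Metric.mem_closedBall, dist_comm] at h
        exact absurd h (not_le.mpr (hfar u hu))
      have hImconn : IsPreconnected (βf '' Set.Ici 0) :=
        isPreconnected_Ici.image _ (ray_continuousOn hβray)
      have hImD : βf '' Set.Ici 0 ⊆
          connectedComponentIn ((fun x : X => g • x) '' {x : X | g0 • x = x})ᶜ x0 :=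
        hImconn.subset_connectedComponentIn ⟨0, Set.self_mem_Ici, hβ0⟩ hImsub
      set T := N + dist x0 (g • x0) + dist x0 (h' • x0) + 1 with hTdef
      have hRh0 : 0 ≤ dist x0 (h' • x0) := dist_nonneg
      have hT0 : (0:ℝ) ≤ T := by rw [hTdef]; linarith
      have hTN : N < T := by rw [hTdef]; linarith
      obtain ⟨σ, hσ⟩ := hCAT.1 (βf T) (h' • α.1 T)
      have hℓRh : dist (βf T) (h' • α.1 T) ≤ dist x0 (h' • x0) := hβas T hT0
      have hσsub : σ '' Set.Icc 0 (dist (βf T) (h' • α.1 T)) ⊆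
          ((fun x : X => g • x) '' {x : X | g0 • x = x})ᶜ := by
        rintro _ ⟨u, ⟨hu0, huℓ⟩, rfl⟩ hmem
        have hσu : dist (σ u) (βf T) = u := by
          have h := hσ.2.2 u ⟨hu0, huℓ⟩ 0 ⟨le_rfl, dist_nonneg⟩
          rw [hσ.1] at h
          rw [h, sub_zero, abs_of_nonneg hu0]
        have hq2 : T - dist x0 (g • x0) ≤ dist (g • x0) (βf T) := by
          have htri : dist x0 (βf T) ≤ dist x0 (g • x0) + dist (g • x0) (βf T) :=
            dist_triangle _ _ _
          rw [ray_dist_base hβray T hT0] at htri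
          linarith
        have hq3 : T - dist x0 (g • x0) - dist x0 (h' • x0) ≤ dist (g • x0) (σ u) := by
          have htri : dist (g • x0) (βf T) ≤ dist (g • x0) (σ u) + dist (σ u) (βf T) :=
            dist_triangle _ _ _
          rw [hσu] at htri
          have huR : u ≤ dist x0 (h' • x0) := le_trans huℓ hℓRh
          linarith
        have h := hFgball hmem
        rw [Metric.mem_closedBall, dist_comm] at h
        rw [hTdef] at hq3
        linarith
      have hσconn : IsPreconnected (σ '' Set.Icc 0 (dist (βf T) (h' • α.1 T))) :=
        isPreconnected_Icc.image _ (geodesic_continuousOn hσ)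
      have hend1 : βf T ∈ σ '' Set.Icc 0 (dist (βf T) (h' • α.1 T)) :=
        ⟨0, ⟨le_rfl, dist_nonneg⟩, hσ.1⟩
      have hend2 : h' • α.1 T ∈ σ '' Set.Icc 0 (dist (βf T) (h' • α.1 T)) :=
        ⟨dist (βf T) (h' • α.1 T), ⟨dist_nonneg, le_rfl⟩, hσ.2.1⟩
      have hsame : h' • α.1 T ∈
          connectedComponentIn ((fun x : X => g • x) '' {x : X | g0 • x = x})ᶜ (βf T) :=
        hσconn.subset_connectedComponentIn hend1 hσsub hend2
      have hβTD : βf T ∈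
          connectedComponentIn ((fun x : X => g • x) '' {x : X | g0 • x = x})ᶜ x0 :=
        hImD ⟨T, hT0, rfl⟩
      have hy1 : h' • α.1 T ∈
          connectedComponentIn ((fun x : X => g • x) '' {x : X | g0 • x = x})ᶜ x0 := by
        have hcc := connectedComponentIn_eq hβTD
        rw [← hcc] at hsame
        exact hsame
      -- image of the component C
      have himg : (fun x : X => h' • x) '' C =
          connectedComponentIn ((fun x : X => g • x) '' {x : X | g0 • x = x})ᶜ
            (h' • α.1 (N + 1)) := by
        have h := (e h').image_connectedComponentIn haF
        have hes : ⇑(e h') '' connectedComponentIn {x : X | g0 • x = x}ᶜ (α.1 (N + 1)) =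
            (fun x : X => h' • x) '' C := rfl
        have hes2 : ⇑(e h') '' {x : X | g0 • x = x}ᶜ =
            ((fun x : X => g • x) '' {x : X | g0 • x = x})ᶜ := by
          have hid : ⇑(e h') '' {x : X | g0 • x = x}ᶜ =
              (fun x : X => h' • x) '' {x : X | g0 • x = x}ᶜ := rfl
          rw [hid, Set.image_compl_eq (MulAction.bijective h'), hFh]
        have hex : (e h') (α.1 (N + 1)) = h' • α.1 (N + 1) := rfl
        rw [hes, hes2, hex] at h
        exact h
      have hmem2 : h' • α.1 T ∈
          connectedComponentIn ((fun x : X => g • x) '' {x : X | g0 • x = x})ᶜ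
            (h' • α.1 (N + 1)) := by
        rw [← himg]
        exact ⟨α.1 T, hαC T hTN, rfl⟩
      rw [himg]
      have hccA := connectedComponentIn_eq hy1
      have hccB := connectedComponentIn_eq hmem2
      exact hccA.trans hccB.symm
    -- apply to β1 and β2
    have hfar1 : ∀ t, 0 ≤ t → N < dist (g • x0) (β1 t) := by
      intro t ht
      exact lt_of_lt_of_le h1 (Metric.infDist_le_dist_of_mem ⟨t, ht, rfl⟩)
    have hfar2 : ∀ t, 0 ≤ t → N < dist (g • x0) (β2 t) := by
      intro t ht
      exact lt_of_lt_of_le h2 (Metric.infDist_le_dist_of_mem ⟨t, ht, rfl⟩)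
    have hg0F : (fun x : X => g0 • x) '' {x : X | g0 • x = x} = {x : X | g0 • x = x} := by
      apply Set.Subset.antisymm
      · rintro _ ⟨x, hx, rfl⟩
        have hx' : g0 • x = x := hx
        show g0 • x ∈ {x : X | g0 • x = x}
        rw [hx']
        exact hx
      · intro x hx
        exact ⟨x, hx, hx⟩
    have hFh2 : (fun x : X => (g * g0) • x) '' {x : X | g0 • x = x} =
        (fun x : X => g • x) '' {x : X | g0 • x = x} := by
      have hcompos : (fun x : X => (g * g0) • x) =
          (fun x : X => g • x) ∘ (fun x : X => g0 • x) := by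
        funext x
        simp [mul_smul]
      rw [hcompos, Set.image_comp, hg0F]
    have main1 := main g β1 hβ1ray hβ1as rfl hfar1
    have main2 := main (g * g0) β2 hβ2ray hβ2as hFh2 hfar2
    have heq : (fun x : X => g • x) '' C = (fun x : X => g • x) '' ((fun x : X => g0 • x) '' C) := by
      have hcompos : (fun x : X => (g * g0) • x) =
          (fun x : X => g • x) ∘ (fun x : X => g0 • x) := by
        funext x
        simp [mul_smul]
      rw [← Set.image_comp, ← hcompos, ← main2, main1]
    have hCC : C = (fun x : X => g0 • x) '' C :=
      Set.image_injective.mpr (MulAction.injective g) heq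
    apply hne
    rw [← Set.image_smul]
    exact hCC.symm
end
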